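/- arXiv:2107.04466 — 7 statements merged into one kernel-verified Lean document; each statement's English description precedes it below -/
import Mathlib

section
/- Let u_n be the iterates of the relaxed greedy algorithm. Then for every n ≥ 1, u_n ∈ Σ_{n,M}(D) and for every z in the set M·B_1(D) (i.e. every z with ‖z‖_{K1(D)} ≤ M) one has L(u_n) − L(z) ≤ 32(CM)²K/n. In particular, L(u_n) − inf{L(z) : ‖z‖_{K1(D)} ≤ M} ≤ 32(CM)²K/n. -/
open Set Pointwise
open scoped InnerProductSpace

noncomputable section

/-- `B₁(𝔻)`: the closure of the convex hull of `𝔻 ∪ (-𝔻)` in `H`. -/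
def symmConvexHull {H : Type*} [NormedAddCommGroup H] [NormedSpace ℝ H]
    (D : Set H) : Set H :=
  closure (convexHull ℝ (D ∪ (-D)))

/-- `Σ_{n,M}(𝔻)`: `n`-term linear combinations of dictionary elements whose coefficients
have ℓ¹-norm at most `M`. -/
def SigmaNM {H : Type*} [NormedAddCommGroup H] [NormedSpace ℝ H]
    (D : Set H) (n : ℕ) (M : ℝ) : Set H :=
  {f | ∃ (a : Fin n → ℝ) (g : Fin n → H),
    (∀ i, g i ∈ D) ∧ (∑ i, |a i|) ≤ M ∧ f = ∑ i, a i • g i}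

/-! Each step of the algorithm is a Frank–Wolfe step towards the point `-M gₙ` of `M·B₁(𝔻)`.
By `K`-smoothness, `L(uₙ)` is at most the linearisation of `L` at `uₙ₋₁` plus
`K/2 · αₙ² · (2CM)²`. Since `gₙ` maximises `⟪·, ∇L(uₙ₋₁)⟫` over the symmetric dictionary, the
linearisation at `-M gₙ` is no larger than at any `z ∈ M·B₁(𝔻)`, and there convexity bounds it
by `L(z)`. Hence `eₙ = L(uₙ) - L(z)` satisfies `eₙ ≤ (1 - αₙ) eₙ₋₁ + 2(CM)²K αₙ²`, and with
`αₙ = 2/n` this recursion gives `eₙ = O(1/n)`. The coefficients of `uₙ` keep ℓ¹-norm at most `M`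
because each step rescales the old ones by `1 - αₙ` and adds one of size `M αₙ`. -/

open AffineMap in
theorem ConvexOn.inner_gradient_le_sub {H : Type*} [NormedAddCommGroup H] [InnerProductSpace ℝ H]
    [CompleteSpace H] {s : Set H} {f : H → ℝ} {p x z : H} (hf : ConvexOn ℝ s f)
    (hx : x ∈ s) (hz : z ∈ s) (hgrad : HasGradientAt f p x) :
    ⟪p, z - x⟫_ℝ ≤ f z - f x := by
  have hline := hf.comp_affineMap (lineMap x z : ℝ →ᵃ[ℝ] H)
  have hgrad' : HasFDerivAt f (InnerProductSpace.toDual ℝ H p) (lineMap x z (0 : ℝ)) := by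
    simpa using hgrad.hasFDerivAt
  have hderiv : HasDerivAt (f ∘ lineMap x z) ⟪p, z - x⟫_ℝ (0 : ℝ) := by
    simpa using hgrad'.comp_hasDerivAt (0 : ℝ) hasDerivAt_lineMap
  simpa [slope_def_field] using
    hline.le_slope_of_hasDerivAt (by simpa using hx) (by simpa using hz) zero_lt_one hderiv

section SigmaNM

variable {H : Type*} [NormedAddCommGroup H] [NormedSpace ℝ H] {D : Set H} {n : ℕ} {M : ℝ}

theorem zero_mem_SigmaNM_zero (hM : 0 ≤ M) : (0 : H) ∈ SigmaNM D 0 M :=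
  ⟨Fin.elim0, Fin.elim0, fun i => i.elim0, by simpa using hM, by simp⟩

theorem norm_le_of_mem_SigmaNM {C : ℝ} {f : H} (hC : 0 ≤ C) (hbound : ∀ g ∈ D, ‖g‖ ≤ C)
    (hf : f ∈ SigmaNM D n M) : ‖f‖ ≤ M * C := by
  obtain ⟨a, g, hg, hsum, rfl⟩ := hf
  calc ‖∑ i, a i • g i‖ ≤ ∑ i, |a i| * ‖g i‖ := by
        simpa only [norm_smul, Real.norm_eq_abs] using norm_sum_le Finset.univ fun i => a i • g i
    _ ≤ ∑ i, |a i| * C := by gcongr with i; exact hbound _ (hg i)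
    _ = (∑ i, |a i|) * C := (Finset.sum_mul _ _ _).symm
    _ ≤ M * C := by gcongr

theorem sub_smul_mem_SigmaNM_succ {t : ℝ} {f g : H} (hM : 0 ≤ M) (ht₀ : 0 ≤ t) (ht₁ : t ≤ 1)
    (hf : f ∈ SigmaNM D n M) (hg : g ∈ D) :
    (1 - t) • f - (M * t) • g ∈ SigmaNM D (n + 1) M := by
  obtain ⟨a, gs, hgs, hsum, rfl⟩ := hf
  refine ⟨Fin.snoc (fun i => (1 - t) * a i) (-(M * t)), Fin.snoc gs g,
    Fin.lastCases (by simpa using hg) (by simpa using hgs), ?_, ?_⟩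
  · calc ∑ i, |(Fin.snoc (fun i => (1 - t) * a i) (-(M * t)) : Fin (n + 1) → ℝ) i|
        = (1 - t) * ∑ i, |a i| + M * t := by
          simp [Fin.sum_univ_castSucc, abs_mul, abs_of_nonneg (sub_nonneg.2 ht₁),
            abs_of_nonneg (mul_nonneg hM ht₀), Finset.mul_sum]
      _ ≤ (1 - t) * M + M * t := by gcongr
      _ = M := by ring
  · simp [Fin.sum_univ_castSucc, Finset.smul_sum, smul_smul, sub_eq_add_neg]

end SigmaNM

theorem neg_le_of_mem_symmConvexHull {H : Type*} [NormedAddCommGroup H] [NormedSpace ℝ H]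
    {D : Set H} {φ : H →L[ℝ] ℝ} {c : ℝ} {w : H} (hsymm : ∀ g ∈ D, -g ∈ D)
    (hmax : ∀ d ∈ D, φ d ≤ c) (hw : w ∈ symmConvexHull D) : -c ≤ φ w := by
  have hD : D ∪ -D ⊆ {v | -c ≤ φ v} := by
    rintro d (hd | hd)
    · simpa [neg_le] using hmax (-d) (hsymm d hd)
    · simpa [neg_le] using hmax (-d) hd
  exact closure_minimal (convexHull_min hD (convex_halfSpace_ge φ.isLinear (-c)))
    (isClosed_le continuous_const φ.continuous) hw

theorem ConvexOn.frankWolfe_step_le {H : Type*} [NormedAddCommGroup H] [InnerProductSpace ℝ H]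
    [CompleteSpace H] {s : Set H} {f : H → ℝ} {p v y z : H} {K t : ℝ} (hf : ConvexOn ℝ s f)
    (hv : v ∈ s) (hz : z ∈ s) (hgrad : HasGradientAt f p v)
    (hsmooth : ∀ w, f w ≤ f v + ⟪p, w - v⟫_ℝ + K / 2 * ‖w - v‖ ^ 2)
    (ht : 0 ≤ t) (hdir : ⟪p, y⟫_ℝ ≤ ⟪p, z⟫_ℝ) :
    f ((1 - t) • v + t • y) - f z ≤ (1 - t) * (f v - f z) + K / 2 * t ^ 2 * ‖y - v‖ ^ 2 := by
  have hmove : (1 - t) • v + t • y - v = t • (y - v) := by module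
  have hupper := hsmooth ((1 - t) • v + t • y)
  rw [hmove, real_inner_smul_right, norm_smul, mul_pow, Real.norm_eq_abs, sq_abs] at hupper
  have hdescent : ⟪p, y - v⟫_ℝ ≤ f z - f v := by
    have := hf.inner_gradient_le_sub hv hz hgrad
    rw [inner_sub_right] at this ⊢
    linarith
  nlinarith [mul_le_mul_of_nonneg_left hdescent ht]

theorem le_div_of_relaxed_recursion {e α : ℕ → ℝ} {B c : ℝ} (hB : 0 ≤ B) (hc : 4 ≤ c)
    (hα : ∀ n : ℕ, α n = min 1 (2 / (n : ℝ)))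
    (he : ∀ n, e (n + 1) ≤ (1 - α (n + 1)) * e n + B * α (n + 1) ^ 2) :
    ∀ n, 1 ≤ n → e n ≤ c * B / n := by
  intro n hn
  induction n, hn using Nat.le_induction with
  | base =>
    have h1 : α 1 = 1 := by rw [hα]; norm_num
    have := he 0
    rw [zero_add, h1] at this
    rw [Nat.cast_one, div_one]
    nlinarith
  | succ n hn ih =>
    have hn' : (1 : ℝ) ≤ n := by exact_mod_cast hn
    have hαn : α (n + 1) = 2 / (n + 1) := by
      rw [hα, Nat.cast_succ, min_eq_right ((div_le_one (by positivity)).2 (by linarith))]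
    have hcontract : 0 ≤ 1 - α (n + 1) := by
      rw [hαn, sub_nonneg, div_le_one (by positivity)]; linarith
    have hgap : (1 - 2 / (n + 1)) * (c * B / n) + B * (2 / (n + 1)) ^ 2 ≤ c * B / (n + 1) := by
      rw [← sub_nonneg]
      have : c * B / (n + 1) - ((1 - 2 / (n + 1)) * (c * B / n) + B * (2 / (n + 1)) ^ 2)
          = B * (c * (n + 1) - 4 * n) / (n * (n + 1) ^ 2) := by
        field_simp
        ring
      rw [this]
      exact div_nonneg (mul_nonneg hB (by nlinarith)) (by positivity)
    calc e (n + 1) ≤ (1 - α (n + 1)) * e n + B * α (n + 1) ^ 2 := he n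
      _ ≤ (1 - α (n + 1)) * (c * B / n) + B * α (n + 1) ^ 2 := by gcongr
      _ ≤ c * B / (n + 1 : ℕ) := by rw [hαn, Nat.cast_succ]; exact hgap

theorem relaxedGreedy_step_le {H : Type*} [NormedAddCommGroup H] [InnerProductSpace ℝ H]
    [CompleteSpace H] {D : Set H} {C K M t : ℝ} {L : H → ℝ} {p v g w : H} (hK : 0 ≤ K)
    (hM : 0 ≤ M) (hsymm : ∀ g ∈ D, -g ∈ D) (hconv : ConvexOn ℝ univ L)
    (hgrad : HasGradientAt L p v) (hsmooth : ∀ u, L u ≤ L v + ⟪p, u - v⟫_ℝ + K / 2 * ‖u - v‖ ^ 2)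
    (hv : ‖v‖ ≤ M * C) (hg : ‖g‖ ≤ C) (hgmax : ∀ d ∈ D, ⟪d, p⟫_ℝ ≤ ⟪g, p⟫_ℝ)
    (hw : w ∈ symmConvexHull D) (ht : 0 ≤ t) :
    L ((1 - t) • v - (M * t) • g) - L (M • w)
      ≤ (1 - t) * (L v - L (M • w)) + K / 2 * (2 * (M * C)) ^ 2 * t ^ 2 := by
  have hdir : ⟪p, -(M • g)⟫_ℝ ≤ ⟪p, M • w⟫_ℝ := by
    have hgw : -⟪p, g⟫_ℝ ≤ ⟪p, w⟫_ℝ :=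
      neg_le_of_mem_symmConvexHull (φ := innerSL ℝ p) hsymm (fun d hd => by
        simpa only [innerSL_apply_apply, real_inner_comm p] using hgmax d hd) hw
    rw [inner_neg_right, real_inner_smul_right, real_inner_smul_right]
    nlinarith
  have hdist : ‖-(M • g) - v‖ ≤ 2 * (M * C) :=
    calc ‖-(M • g) - v‖ ≤ M * ‖g‖ + ‖v‖ := by
          simpa [norm_smul, abs_of_nonneg hM] using norm_sub_le (-(M • g)) v
      _ ≤ 2 * (M * C) := by nlinarith
  have hsq := pow_le_pow_left₀ (norm_nonneg _) hdist 2
  have hrelax : (1 - t) • v - (M * t) • g = (1 - t) • v + t • -(M • g) := by module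
  rw [hrelax]
  nlinarith [hconv.frankWolfe_step_le (mem_univ _) (mem_univ _) hgrad hsmooth ht hdir,
    mul_le_mul_of_nonneg_left hsq (mul_nonneg hK (sq_nonneg t))]

/-- **Convergence of the relaxed greedy algorithm.**
Let `H` be a real Hilbert space, `𝔻 ⊆ H` a symmetric dictionary with `sup_{g∈𝔻} ‖g‖ ≤ C`,
`L : H → ℝ` convex, Fréchet differentiable with gradient `∇L`, and `K`-smooth, and fix `M > 0`.
Let `u_n` be the iterates of the relaxed greedy algorithm: `u₀ = 0`,
`g_n = argmax_{g ∈ 𝔻} ⟨g, ∇L(u_{n−1})⟩`, `α_n = min(1, 2/n)`,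
`u_n = (1 − α_n) u_{n−1} − M α_n g_n`. Then for every `n ≥ 1`, `u_n ∈ Σ_{n,M}(𝔻)` and
for every `z ∈ M·B₁(𝔻)` one has `L(u_n) − L(z) ≤ 32 (CM)² K / n`; in particular the same
bound holds with `inf {L(z) : ‖z‖_{K₁(𝔻)} ≤ M}` in place of `L(z)`. -/
theorem rga_convergence
    {H : Type*} [NormedAddCommGroup H] [InnerProductSpace ℝ H] [CompleteSpace H]
    (D : Set H) (C K M : ℝ) (hK : 0 ≤ K) (hM : 0 < M)
    (hsymm : ∀ g ∈ D, -g ∈ D)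
    (hbound : ∀ g ∈ D, ‖g‖ ≤ C)
    (L : H → ℝ) (gradL : H → H)
    (hconv : ConvexOn ℝ Set.univ L)
    (hdiff : ∀ v : H, HasGradientAt L (gradL v) v)
    (hsmooth : ∀ u v : H, L u ≤ L v + ⟪gradL v, u - v⟫_ℝ + K / 2 * ‖u - v‖ ^ 2)
    (u g : ℕ → H) (α : ℕ → ℝ)
    (hu0 : u 0 = 0)
    (hα : ∀ n : ℕ, α n = min 1 (2 / (n : ℝ)))
    (hgD : ∀ n : ℕ, 1 ≤ n → g n ∈ D)
    (hgmax : ∀ n : ℕ, 1 ≤ n → ∀ d ∈ D,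
      ⟪d, gradL (u (n - 1))⟫_ℝ ≤ ⟪g n, gradL (u (n - 1))⟫_ℝ)
    (hiter : ∀ n : ℕ, 1 ≤ n → u n = (1 - α n) • u (n - 1) - (M * α n) • g n) :
    ∀ n : ℕ, 1 ≤ n →
      u n ∈ SigmaNM D n M ∧
      ∀ z ∈ M • symmConvexHull D,
        L (u n) - L z ≤ 32 * (C * M) ^ 2 * K / (n : ℝ) := by
  have hC : 0 ≤ C := (norm_nonneg _).trans (hbound _ (hgD 1 le_rfl))
  have hα₀₁ : ∀ n, 0 ≤ α n ∧ α n ≤ 1 := fun n => by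
    rw [hα]; exact ⟨le_min zero_le_one (by positivity), min_le_left _ _⟩
  have hsucc : ∀ n : ℕ,
      u (n + 1) = (1 - α (n + 1)) • u n - (M * α (n + 1)) • g (n + 1) := fun n => by
    simpa using hiter (n + 1) (Nat.le_add_left 1 n)
  have hmem : ∀ n, u n ∈ SigmaNM D n M := by
    intro n
    induction n with
    | zero => rw [hu0]; exact zero_mem_SigmaNM_zero hM.le
    | succ n ih =>
      rw [hsucc]
      exact sub_smul_mem_SigmaNM_succ hM.le (hα₀₁ _).1 (hα₀₁ _).2 ih (hgD _ (by omega))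
  intro n hn
  refine ⟨hmem n, ?_⟩
  rintro _ ⟨w, hw, rfl⟩
  have hstep : ∀ n, L (u (n + 1)) - L (M • w) ≤ (1 - α (n + 1)) * (L (u n) - L (M • w))
      + K / 2 * (2 * (M * C)) ^ 2 * α (n + 1) ^ 2 := fun n => by
    rw [hsucc]
    exact relaxedGreedy_step_le hK hM.le hsymm hconv (hdiff _) (fun v => hsmooth v _)
      (norm_le_of_mem_SigmaNM hC hbound (hmem n)) (hbound _ (hgD _ (by omega)))
      (by simpa using hgmax (n + 1) (by omega)) hw (hα₀₁ _).1
  calc L (u n) - L (M • w) ≤ 16 * (K / 2 * (2 * (M * C)) ^ 2) / n :=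
        le_div_of_relaxed_recursion (e := fun k => L (u k) - L (M • w)) (by positivity)
          (by norm_num) hα hstep n hn
    _ = 32 * (C * M) ^ 2 * K / n := by ring
end
end

section
/- Let u_k be the iterates of the relaxed greedy algorithm. Then for every k ≥ 1 and every z ∈ M·B_1(D), one has the one-step recursion L(u_k) − L(z) ≤ (1 − α_k)(L(u_{k−1}) − L(z)) + 2(CM)²K α_k². -/
open Set Pointwise
open scoped InnerProductSpace

noncomputable section

/-!
The RGA step is a Frank–Wolfe step: `u_k = (1 - α_k) u_{k-1} + α_k s_k` with `s_k = -M g_k`,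
and the choice of `g_k` makes `s_k` minimise the linearisation `⟪∇L(u_{k-1}), ·⟫` over
`M • B₁(𝔻)`. Smoothness bounds `L(u_k)` by that linearisation plus `(K/2) α_k² ‖s_k - u_{k-1}‖²`;
convexity bounds the linear term by `α_k (L z - L u_{k-1})`; and since the iterates are convex
combinations of points of norm `≤ CM`, `‖s_k - u_{k-1}‖ ≤ 2CM`.
-/

section Convex

variable {E : Type*} [NormedAddCommGroup E] [NormedSpace ℝ E]

theorem ConvexOn.add_fderiv_sub_le {f : E → ℝ} {f' : E →L[ℝ] ℝ} {x : E}
    (hf : ConvexOn ℝ univ f) (hf' : HasFDerivAt f f' x) (y : E) :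
    f x + f' (y - x) ≤ f y := by
  have hline : ConvexOn ℝ univ (f ∘ AffineMap.lineMap (k := ℝ) x y) := by
    simpa using hf.comp_affineMap (AffineMap.lineMap x y)
  have hderiv : HasDerivAt (f ∘ AffineMap.lineMap (k := ℝ) x y) (f' (y - x)) 0 := by
    have hf₀ : HasFDerivAt f f' (AffineMap.lineMap x y (0 : ℝ)) := by simpa using hf'
    exact hf₀.comp_hasDerivAt 0 AffineMap.hasDerivAt_lineMap
  have := hline.le_slope_of_hasDerivAt (mem_univ 0) (mem_univ 1) one_pos hderiv
  simpa [slope_def_field, le_sub_iff_add_le'] using this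

theorem abs_le_of_mem_symmConvexHull {D : Set E} (ℓ : E →L[ℝ] ℝ) {c : ℝ}
    (hD : ∀ d ∈ D, |ℓ d| ≤ c) {w : E} (hw : w ∈ symmConvexHull D) : |ℓ w| ≤ c := by
  suffices w ∈ ℓ ⁻¹' Icc (-c) c from abs_le.2 this
  refine closure_minimal (convexHull_min ?_ ((convex_Icc _ _).linear_preimage ℓ.toLinearMap))
    (isClosed_Icc.preimage ℓ.continuous) hw
  rintro d (hd | hd)
  · exact abs_le.1 (hD d hd)
  · simpa [abs_le, neg_le, and_comm] using hD _ hd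

theorem relaxed_iterate_mem {S : Set E} (hS : Convex ℝ S) {u s : ℕ → E} {α : ℕ → ℝ}
    (hα : ∀ k, α k ∈ Icc 0 1) (hu0 : u 0 ∈ S) (hs : ∀ k, 1 ≤ k → s k ∈ S)
    (hstep : ∀ k, 1 ≤ k → u k = (1 - α k) • u (k - 1) + α k • s k) (k : ℕ) : u k ∈ S := by
  induction k with
  | zero => exact hu0
  | succ k ih =>
    rw [hstep (k + 1) k.succ_pos, Nat.add_sub_cancel]
    exact hS ih (hs (k + 1) k.succ_pos) (by linarith [(hα (k + 1)).2]) (hα (k + 1)).1 (by ring)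

end Convex

section Hilbert

variable {H : Type*} [NormedAddCommGroup H] [InnerProductSpace ℝ H] [CompleteSpace H]

theorem ConvexOn.add_inner_gradient_sub_le {f : H → ℝ} {G x : H}
    (hf : ConvexOn ℝ univ f) (hG : HasGradientAt f G x) (y : H) :
    f x + ⟪G, y - x⟫_ℝ ≤ f y := by
  simpa using hf.add_fderiv_sub_le hG.hasFDerivAt y

theorem frankWolfe_step_le {L : H → ℝ} {G v s z : H} {K R a : ℝ}
    (hconv : ConvexOn ℝ univ L) (hG : HasGradientAt L G v)
    (hsmooth : ∀ u, L u ≤ L v + ⟪G, u - v⟫_ℝ + K / 2 * ‖u - v‖ ^ 2)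
    (hK : 0 ≤ K) (ha : 0 ≤ a) (hs : ⟪G, s⟫_ℝ ≤ ⟪G, z⟫_ℝ) (hsv : ‖s - v‖ ≤ R) :
    L ((1 - a) • v + a • s) - L z ≤ (1 - a) * (L v - L z) + K / 2 * R ^ 2 * a ^ 2 := by
  have hdiff : (1 - a) • v + a • s - v = a • (s - v) := by module
  have hlin : ⟪G, a • (s - v)⟫_ℝ ≤ a * (L z - L v) := by
    rw [real_inner_smul_right]
    have := hconv.add_inner_gradient_sub_le hG z
    gcongr
    rw [inner_sub_right] at this ⊢
    linarith
  have hquad : ‖a • (s - v)‖ ^ 2 ≤ R ^ 2 * a ^ 2 := by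
    rw [norm_smul, Real.norm_of_nonneg ha, mul_pow, mul_comm]
    gcongr
  have hstep := hsmooth ((1 - a) • v + a • s)
  rw [hdiff] at hstep
  have := mul_le_mul_of_nonneg_left hquad (by positivity : 0 ≤ K / 2)
  linarith

end Hilbert

theorem min_one_two_div_mem_Icc (k : ℕ) : min 1 (2 / (k : ℝ)) ∈ Icc 0 1 :=
  ⟨le_min zero_le_one (by positivity), min_le_left _ _⟩

/-- **One-step recursion for the relaxed greedy algorithm.**
Let `H` be a real Hilbert space, `𝔻 ⊆ H` a symmetric dictionary with `sup_{g∈𝔻} ‖g‖ ≤ C`,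
`L : H → ℝ` convex, Fréchet differentiable with gradient `∇L`, and `K`-smooth, and fix `M > 0`.
Let `u_k` be the iterates of the relaxed greedy algorithm. Then for every `k ≥ 1` and every
`z ∈ M·B₁(𝔻)`, one has `L(u_k) − L(z) ≤ (1 − α_k)(L(u_{k−1}) − L(z)) + 2 (CM)² K α_k²`. -/
theorem rga_one_step_recursion
    {H : Type*} [NormedAddCommGroup H] [InnerProductSpace ℝ H] [CompleteSpace H]
    (D : Set H) (C K M : ℝ) (hK : 0 ≤ K) (hM : 0 < M)
    (hsymm : ∀ g ∈ D, -g ∈ D)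
    (hbound : ∀ g ∈ D, ‖g‖ ≤ C)
    (L : H → ℝ) (gradL : H → H)
    (hconv : ConvexOn ℝ Set.univ L)
    (hdiff : ∀ v : H, HasGradientAt L (gradL v) v)
    (hsmooth : ∀ u v : H, L u ≤ L v + ⟪gradL v, u - v⟫_ℝ + K / 2 * ‖u - v‖ ^ 2)
    (u g : ℕ → H) (α : ℕ → ℝ)
    (hu0 : u 0 = 0)
    (hα : ∀ k : ℕ, α k = min 1 (2 / (k : ℝ)))
    (hgD : ∀ k : ℕ, 1 ≤ k → g k ∈ D)
    (hgmax : ∀ k : ℕ, 1 ≤ k → ∀ d ∈ D,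
      ⟪d, gradL (u (k - 1))⟫_ℝ ≤ ⟪g k, gradL (u (k - 1))⟫_ℝ)
    (hiter : ∀ k : ℕ, 1 ≤ k → u k = (1 - α k) • u (k - 1) - (M * α k) • g k) :
    ∀ k : ℕ, 1 ≤ k → ∀ z ∈ M • symmConvexHull D,
      L (u k) - L z ≤ (1 - α k) * (L (u (k - 1)) - L z) + 2 * (C * M) ^ 2 * K * (α k) ^ 2 := by
  have hαI : ∀ k, α k ∈ Icc 0 1 := fun k => hα k ▸ min_one_two_div_mem_Icc k
  have hstep : ∀ k, 1 ≤ k → u k = (1 - α k) • u (k - 1) + α k • -(M • g k) := fun k hk => by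
    rw [hiter k hk, smul_neg, smul_smul, mul_comm, sub_eq_add_neg]
  have hsnorm : ∀ k, 1 ≤ k → ‖-(M • g k)‖ ≤ C * M := fun k hk => by
    rw [norm_neg, norm_smul, Real.norm_of_nonneg hM.le, mul_comm]
    exact mul_le_mul_of_nonneg_right (hbound _ (hgD k hk)) hM.le
  have hunorm : ∀ j, ‖u j‖ ≤ C * M := fun j => mem_closedBall_zero_iff.1 <|
    relaxed_iterate_mem (convex_closedBall 0 (C * M)) hαI
      (by simpa [hu0] using (norm_nonneg _).trans (hsnorm 1 le_rfl))
      (fun k hk => mem_closedBall_zero_iff.2 (hsnorm k hk)) hstep j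
  rintro k hk _ ⟨w, hw, rfl⟩
  set G := gradL (u (k - 1))
  have hwG : |⟪G, w⟫_ℝ| ≤ ⟪G, g k⟫_ℝ :=
    abs_le_of_mem_symmConvexHull (innerSL ℝ G) (fun d hd => by
      have h₁ := hgmax k hk d hd
      have h₂ := hgmax k hk (-d) (hsymm d hd)
      rw [inner_neg_left] at h₂
      rw [innerSL_apply_apply, real_inner_comm d G, real_inner_comm (g k) G, abs_le]
      exact ⟨by linarith, h₁⟩) hw
  have hs : ⟪G, -(M • g k)⟫_ℝ ≤ ⟪G, M • w⟫_ℝ := by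
    rw [inner_neg_right, real_inner_smul_right, real_inner_smul_right]
    linarith [mul_le_mul_of_nonneg_left (neg_le_of_abs_le hwG) hM.le]
  have hsv : ‖-(M • g k) - u (k - 1)‖ ≤ 2 * (C * M) :=
    (norm_sub_le _ _).trans (by linarith [hsnorm k hk, hunorm (k - 1)])
  rw [hstep k hk]
  convert frankWolfe_step_le hconv (hdiff _) (fun u => hsmooth u _) hK (hαI k).1 hs hsv
    using 2
  ring
end
end

section
/- Let B ≥ 0, let s_k = min(1, 2/k), and let (a_k)_{k≥0} be a sequence of real numbers satisfying a_k ≤ (1 − s_k) a_{k−1} + B s_k² for all k ≥ 1. Then a_n ≤ 16B/n for all n ≥ 1 (regardless of the value of a_0). -/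
/-- **Recursion-unrolling lemma for the relaxed greedy algorithm.**
Let `B ≥ 0`, let `s_k = min(1, 2/k)`, and let `(a_k)_{k ≥ 0}` be a sequence of real numbers
satisfying `a_k ≤ (1 − s_k) a_{k−1} + B s_k²` for all `k ≥ 1`. Then `a_n ≤ 16 B / n`
for all `n ≥ 1`, regardless of the value of `a_0`. -/
theorem recursion_unrolling_bound (B : ℝ) (hB : 0 ≤ B)
    (s : ℕ → ℝ) (hs : ∀ k : ℕ, s k = min 1 (2 / (k : ℝ)))
    (a : ℕ → ℝ) (ha : ∀ k : ℕ, 1 ≤ k → a k ≤ (1 - s k) * a (k - 1) + B * (s k) ^ 2) :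
    ∀ n : ℕ, 1 ≤ n → a n ≤ 16 * B / (n : ℝ) := by
  intro n hn
  induction n with
  | zero => omega
  | succ m ih =>
    rcases Nat.eq_zero_or_pos m with hm | hm
    · -- base case n = 1
      subst hm
      have h1 := ha 1 le_rfl
      rw [hs 1] at h1
      norm_num at h1 ⊢
      linarith
    · -- inductive step, m ≥ 1
      have ihm := ih hm
      have hx : (1 : ℝ) ≤ (m : ℝ) := by exact_mod_cast hm
      have h := ha (m + 1) (by omega)
      simp only [Nat.add_sub_cancel] at h
      rw [hs (m + 1)] at h
      have hcast : ((m + 1 : ℕ) : ℝ) = (m : ℝ) + 1 := by push_cast; ring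
      rw [hcast] at h
      have hmin : min 1 (2 / ((m : ℝ) + 1)) = 2 / ((m : ℝ) + 1) := by
        apply min_eq_right
        rw [div_le_one (by linarith)]
        linarith
      rw [hmin] at h
      have hs0 : (0 : ℝ) ≤ 1 - 2 / ((m : ℝ) + 1) := by
        have : 2 / ((m : ℝ) + 1) ≤ 1 := by
          rw [div_le_one (by linarith)]; linarith
        linarith
      have hstep : (1 - 2 / ((m : ℝ) + 1)) * a m ≤
          (1 - 2 / ((m : ℝ) + 1)) * (16 * B / (m : ℝ)) :=
        mul_le_mul_of_nonneg_left ihm hs0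
      have hkey : (1 - 2 / ((m : ℝ) + 1)) * (16 * B / (m : ℝ)) +
          B * (2 / ((m : ℝ) + 1)) ^ 2 ≤ 16 * B / ((m : ℝ) + 1) := by
        have hm0 : (0:ℝ) < (m:ℝ) := by linarith
        have hm1 : (0:ℝ) < (m:ℝ) + 1 := by linarith
        have heq : 16 * B / ((m:ℝ)+1) - ((1 - 2 / ((m : ℝ) + 1)) * (16 * B / (m : ℝ)) +
            B * (2 / ((m : ℝ) + 1)) ^ 2) = B * (12*(m:ℝ)+16) / ((m:ℝ) * ((m:ℝ)+1)^2) := by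
          field_simp
          ring
        have hnn : (0:ℝ) ≤ B * (12*(m:ℝ)+16) / ((m:ℝ) * ((m:ℝ)+1)^2) := by positivity
        linarith
      calc a (m + 1) ≤ (1 - 2 / ((m : ℝ) + 1)) * a m + B * (2 / ((m : ℝ) + 1)) ^ 2 := h
        _ ≤ 16 * B / ((m : ℝ) + 1) := by linarith
        _ = 16 * B / ((m + 1 : ℕ) : ℝ) := by rw [hcast]
end

section
/- Let F be a set of real-valued functions on Ω, let x_1, …, x_N ∈ Ω be fixed points at which the relevant suprema are finite, and let f : Ω → ℝ satisfy |f(x_i)| ≤ B for i = 1, …, N. Define f·F = {x ↦ f(x)h(x) : h ∈ F}. Then the empirical Rademacher complexity satisfies R̂_N(f·F; x_1,…,x_N) ≤ B · R̂_N(F; x_1,…,x_N). -/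
open Set

noncomputable section

/-- The empirical Rademacher complexity
`R̂_N(F; x) = 2^{−N} ∑_{ξ ∈ {−1,1}^N} sup_{h∈F} (1/N) ∑_i ξ_i h(x_i)`. -/
def empRad {Ω : Type*} (N : ℕ) (F : Set (Ω → ℝ)) (x : Fin N → Ω) : ℝ :=
  (2 ^ N : ℝ)⁻¹ * ∑ ξ : Fin N → Bool,
    sSup ((fun h : Ω → ℝ =>
      (N : ℝ)⁻¹ * ∑ i, (if ξ i then (1 : ℝ) else -1) * h (x i)) '' F)

/-!
Write `ε_i = ±1` for the signs and put `S = {(h(x_i))_i : h ∈ F} ⊆ ℝᴺ`. Then `2ᴺ R̂_N(f·F)` is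
`∑_ε sup_{a ∈ S} ∑_i ε_i c_i a_i` with weights `c_i = f(x_i)/N`, and we may raise one weight `c_j`
to `B/N` at a time without decreasing this sum. Pairing each `ε` with its flip at `j`, this
reduces to `sup(t u + v) + sup(-t u + v) ≤ sup(s u + v) + sup(-s u + v)` for `|t| ≤ |s|`, which
holds because `t (u a - u b) ≤ |s (u a - u b)|` for all `a, b ∈ S`.
-/

open Finset Function Matrix Bornology

def rademacherSign (b : Bool) : ℝ := if b then 1 else -1

@[simp]
lemma rademacherSign_not (b : Bool) : rademacherSign (!b) = -rademacherSign b := by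
  cases b <;> simp [rademacherSign]

@[simp]
lemma abs_rademacherSign (b : Bool) : |rademacherSign b| = 1 := by
  cases b <;> simp [rademacherSign]

lemma rademacherSign_decide_nonneg_mul (t : ℝ) : rademacherSign (decide (0 ≤ t)) * t = |t| := by
  rcases le_or_gt 0 t with ht | ht
  · simp [rademacherSign, ht, abs_of_nonneg ht]
  · simp [rademacherSign, ht.not_ge, abs_of_neg ht]

lemma Fintype.sum_le_sum_of_add_perm_le {α M : Type*} [Fintype α] [AddCommMonoid M] [LinearOrder M]
    [IsOrderedCancelAddMonoid M] (σ : Equiv.Perm α) {f g : α → M}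
    (h : ∀ a, f a + f (σ a) ≤ g a + g (σ a)) : ∑ a, f a ≤ ∑ a, g a := by
  have hsum := Finset.sum_le_sum (s := Finset.univ) fun a _ => h a
  rw [sum_add_distrib, sum_add_distrib, Equiv.sum_comp, Equiv.sum_comp] at hsum
  by_contra! hlt
  exact (add_lt_add hlt hlt).not_ge hsum

lemma csSup_add_csSup_neg_le {α : Type*} {S : Set α} (hS : S.Nonempty) (u v : α → ℝ)
    {t s : ℝ} (hts : |t| ≤ |s|)
    (hs : BddAbove ((fun a => s * u a + v a) '' S))
    (hs' : BddAbove ((fun a => -s * u a + v a) '' S)) :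
    sSup ((fun a => t * u a + v a) '' S) + sSup ((fun a => -t * u a + v a) '' S) ≤
      sSup ((fun a => s * u a + v a) '' S) + sSup ((fun a => -s * u a + v a) '' S) := by
  have hpair : ∀ a ∈ S, ∀ b ∈ S, (t * u a + v a) + (-t * u b + v b) ≤
      sSup ((fun a => s * u a + v a) '' S) + sSup ((fun a => -s * u a + v a) '' S) := by
    intro a ha b hb
    have hle : t * (u a - u b) ≤ |s * (u a - u b)| :=
      calc t * (u a - u b) ≤ |t * (u a - u b)| := le_abs_self _
        _ ≤ |s * (u a - u b)| := by rw [abs_mul, abs_mul]; gcongr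
    have hsa := le_csSup hs (Set.mem_image_of_mem _ ha)
    have hsb := le_csSup hs (Set.mem_image_of_mem _ hb)
    have hsa' := le_csSup hs' (Set.mem_image_of_mem _ ha)
    have hsb' := le_csSup hs' (Set.mem_image_of_mem _ hb)
    rcases abs_cases (s * (u a - u b)) with ⟨habs, -⟩ | ⟨habs, -⟩ <;> linarith
  refine add_le_of_le_sub_right (csSup_le (hS.image _) ?_)
  rintro _ ⟨a, ha, rfl⟩
  refine le_sub_right_of_add_le (add_le_of_le_sub_left (csSup_le (hS.image _) ?_))
  rintro _ ⟨b, hb, rfl⟩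
  linarith [hpair a ha b hb]

section

variable {ι : Type*} [Fintype ι]

lemma bddAbove_dotProduct_image {S : Set (ι → ℝ)} (hS : IsBounded S) (w : ι → ℝ) :
    BddAbove ((w ⬝ᵥ ·) '' S) :=
  ((hS.isCompact_closure.image (continuous_const.dotProduct continuous_id)).isBounded.subset
    (Set.image_mono subset_closure)).bddAbove

variable [DecidableEq ι]

lemma dotProduct_update_eq (w a : ι → ℝ) (j : ι) (t : ℝ) :
    update w j t ⬝ᵥ a = t * a j + update w j 0 ⬝ᵥ a := by
  have : update w j t = Pi.single j t + update w j 0 := by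
    ext i; by_cases hi : i = j <;> simp [hi]
  rw [this, add_dotProduct, single_dotProduct]

/-- `2 ^ card ι` times the Rademacher average of `S` with coordinate weights `c`; the weights
absorb both the factor `1 / N` and a multiplier. -/
def rademacherSum (S : Set (ι → ℝ)) (c : ι → ℝ) : ℝ :=
  ∑ ξ : ι → Bool, sSup ((fun a => (fun i => rademacherSign (ξ i) * c i) ⬝ᵥ a) '' S)

lemma csSup_dotProduct_update_add_le {S : Set (ι → ℝ)} (hS : S.Nonempty)
    (hSb : IsBounded S) (w : ι → ℝ) (j : ι) {t s : ℝ} (hts : |t| ≤ |s|) :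
    sSup ((update w j t ⬝ᵥ ·) '' S) + sSup ((update w j (-t) ⬝ᵥ ·) '' S) ≤
      sSup ((update w j s ⬝ᵥ ·) '' S) + sSup ((update w j (-s) ⬝ᵥ ·) '' S) := by
  have hsplit : ∀ r, (update w j r ⬝ᵥ ·) = fun a => r * a j + update w j 0 ⬝ᵥ a :=
    fun r => funext (dotProduct_update_eq w · j r)
  have hs := bddAbove_dotProduct_image hSb (update w j s)
  have hs' := bddAbove_dotProduct_image hSb (update w j (-s))
  rw [hsplit] at hs hs'
  rw [hsplit t, hsplit (-t), hsplit s, hsplit (-s)]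
  exact csSup_add_csSup_neg_le hS (· j) _ hts hs hs'

lemma rademacherSum_le_update {S : Set (ι → ℝ)} (hS : S.Nonempty)
    (hSb : IsBounded S) {c : ι → ℝ} {j : ι} {b : ℝ} (hb : |c j| ≤ |b|) :
    rademacherSum S c ≤ rademacherSum S (update c j b) := by
  have hflip : Involutive fun ξ : ι → Bool => update ξ j (!ξ j) := fun ξ => by simp
  refine Fintype.sum_le_sum_of_add_perm_le hflip.toPerm fun ξ => ?_
  set w := fun i => rademacherSign (ξ i) * c i
  have e1 : w = update w j (rademacherSign (ξ j) * c j) := (update_eq_self j w).symm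
  have e2 : (fun i => rademacherSign (hflip.toPerm _ ξ i) * c i) =
      update w j (-(rademacherSign (ξ j) * c j)) := by
    ext i; by_cases hi : i = j <;> simp [hi, w]
  have e3 : (fun i => rademacherSign (ξ i) * update c j b i) =
      update w j (rademacherSign (ξ j) * b) := by
    ext i; by_cases hi : i = j <;> simp [hi, w]
  have e4 : (fun i => rademacherSign (hflip.toPerm _ ξ i) * update c j b i) =
      update w j (-(rademacherSign (ξ j) * b)) := by
    ext i; by_cases hi : i = j <;> simp [hi, w]
  rw [e2, e3, e4]
  nth_rw 1 [e1]
  exact csSup_dotProduct_update_add_le hS hSb w j (by simpa [abs_mul] using hb)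

theorem rademacherSum_le_of_abs_le {S : Set (ι → ℝ)} (hS : S.Nonempty) (hSb : IsBounded S)
    {c d : ι → ℝ} (hcd : ∀ i, |c i| ≤ |d i|) : rademacherSum S c ≤ rademacherSum S d := by
  have hpiecewise : ∀ s : Finset ι, rademacherSum S c ≤ rademacherSum S (s.piecewise d c) := by
    intro s
    induction s using Finset.induction_on with
    | empty => rw [Finset.piecewise_empty]
    | insert j s hj ih =>
      rw [Finset.piecewise_insert]
      refine ih.trans (rademacherSum_le_update hS hSb ?_)
      rw [Finset.piecewise_eq_of_notMem _ _ _ hj]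
      exact hcd j
  simpa using hpiecewise univ

lemma rademacherSum_smul (S : Set (ι → ℝ)) (c : ι → ℝ) {r : ℝ} (hr : 0 ≤ r) :
    rademacherSum S (r • c) = r * rademacherSum S c := by
  rw [rademacherSum, rademacherSum, mul_sum]
  refine sum_congr rfl fun ξ _ => ?_
  rw [← smul_eq_mul, ← Real.sSup_smul_of_nonneg hr, ← Set.image_smul, Set.image_image]
  congr 2 with a
  simp only [dotProduct, Pi.smul_apply, smul_eq_mul, mul_sum]
  exact sum_congr rfl fun i _ => by ring

lemma rademacherSum_image_mul (S : Set (ι → ℝ)) (c g : ι → ℝ) :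
    rademacherSum ((g * ·) '' S) c = rademacherSum S (c * g) := by
  simp only [rademacherSum, Set.image_image]
  refine sum_congr rfl fun ξ _ => congrArg sSup (Set.image_congr fun a _ => ?_)
  simp only [dotProduct, Pi.mul_apply]
  exact sum_congr rfl fun i _ => by ring

lemma isBounded_of_forall_bddAbove_sign_dotProduct {S : Set (ι → ℝ)} {r : ℝ} (hr : 0 < r)
    (hS : ∀ ξ : ι → Bool, BddAbove ((fun a => (fun i => rademacherSign (ξ i) * r) ⬝ᵥ a) '' S)) :
    IsBounded S := by
  choose M hM using hS
  set M' := univ.sup' univ_nonempty M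
  refine isBounded_iff_forall_norm_le.2 ⟨M' / r, fun a ha => ?_⟩
  have hl1 : r * ∑ i, |a i| ≤ M' :=
    calc r * ∑ i, |a i|
        = (fun i => rademacherSign (decide (0 ≤ a i)) * r) ⬝ᵥ a := by
          simp only [dotProduct, mul_sum, mul_right_comm _ r, rademacherSign_decide_nonneg_mul]
          exact sum_congr rfl fun i _ => mul_comm _ _
      _ ≤ M' := (hM _ (Set.mem_image_of_mem _ ha)).trans (le_sup' M (mem_univ _))
  have hnorm : ‖a‖ ≤ ∑ i, |a i| :=
    (pi_norm_le_iff_of_nonneg (sum_nonneg fun i _ => abs_nonneg _)).2 fun i =>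
      single_le_sum (f := fun i => |a i|) (fun i _ => abs_nonneg _) (mem_univ i)
  rw [le_div_iff₀ hr]
  linarith [mul_le_mul_of_nonneg_right hnorm hr.le]

end

lemma inv_mul_sum_rademacherSign_eq_dotProduct {N : ℕ} (ξ : Fin N → Bool) (a : Fin N → ℝ) :
    (N : ℝ)⁻¹ * ∑ i, (if ξ i then (1 : ℝ) else -1) * a i =
      (fun i => rademacherSign (ξ i) * (N : ℝ)⁻¹) ⬝ᵥ a := by
  simp only [dotProduct, mul_sum]
  exact sum_congr rfl fun i _ => by rw [rademacherSign]; ring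

lemma empRad_eq_rademacherSum {Ω : Type*} (N : ℕ) (F : Set (Ω → ℝ)) (x : Fin N → Ω) :
    empRad N F x =
      (2 ^ N : ℝ)⁻¹ * rademacherSum ((fun h i => h (x i)) '' F) (fun _ => (N : ℝ)⁻¹) := by
  simp only [empRad, rademacherSum, Set.image_image, inv_mul_sum_rademacherSign_eq_dotProduct]

theorem empRad_mul_le_general
    {Ω : Type*} (N : ℕ) (F : Set (Ω → ℝ)) (x : Fin N → Ω)
    (hF : F.Nonempty)
    (hbddF : ∀ ξ : Fin N → Bool, BddAbove ((fun h : Ω → ℝ =>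
      (N : ℝ)⁻¹ * ∑ i, (if ξ i then (1 : ℝ) else -1) * h (x i)) '' F))
    (f : Ω → ℝ)
    (B : ℝ) (hB : ∀ i, |f (x i)| ≤ B) :
    empRad N ((fun h : Ω → ℝ => fun y => f y * h y) '' F) x ≤ B * empRad N F x := by
  rcases isEmpty_or_nonempty (Fin N) with _ | ⟨⟨i₀⟩⟩
  · simp [empRad, hF.image_const, (hF.image _).image_const]
  have hB0 : 0 ≤ B := (abs_nonneg _).trans (hB i₀)
  have hNinv : (0 : ℝ) < (N : ℝ)⁻¹ := by have := i₀.pos; positivity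
  set S := (fun h i => h (x i)) '' F
  have hSb : IsBounded S := isBounded_of_forall_bddAbove_sign_dotProduct hNinv fun ξ => by
    simpa only [S, Set.image_image, inv_mul_sum_rademacherSign_eq_dotProduct] using hbddF ξ
  have hfS : (fun h i => h (x i)) '' ((fun h y => f y * h y) '' F) =
      ((fun i => f (x i)) * ·) '' S := by
    simp only [S, Set.image_image]; rfl
  rw [empRad_eq_rademacherSum, empRad_eq_rademacherSum, hfS, rademacherSum_image_mul,
    mul_left_comm, ← rademacherSum_smul _ _ hB0]
  gcongr
  refine rademacherSum_le_of_abs_le (hF.image _) hSb fun i => ?_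
  simp only [Pi.mul_apply, Pi.smul_apply, smul_eq_mul, abs_mul, abs_of_pos hNinv, abs_of_nonneg hB0]
  rw [mul_comm B]
  gcongr
  exact hB i

/-- **Bounded-multiplier bound for the empirical Rademacher complexity.**
Let `F` be a set of real-valued functions on `Ω`, `x_1, …, x_N ∈ Ω` fixed points at which
the relevant suprema are finite, and `f : Ω → ℝ` with `|f(x_i)| ≤ B` for all `i`. Then
`R̂_N(f·F; x) ≤ B · R̂_N(F; x)`, where `f·F = {x ↦ f(x)h(x) : h ∈ F}`. -/
theorem empRad_mul_le
    {Ω : Type*} (N : ℕ) (F : Set (Ω → ℝ)) (x : Fin N → Ω)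
    (hF : F.Nonempty)
    (hbddF : ∀ ξ : Fin N → Bool, BddAbove ((fun h : Ω → ℝ =>
      (N : ℝ)⁻¹ * ∑ i, (if ξ i then (1 : ℝ) else -1) * h (x i)) '' F))
    (f : Ω → ℝ)
    (hbddfF : ∀ ξ : Fin N → Bool, BddAbove ((fun h : Ω → ℝ =>
      (N : ℝ)⁻¹ * ∑ i, (if ξ i then (1 : ℝ) else -1) * (f (x i) * h (x i))) '' F))
    (B : ℝ) (hB : ∀ i, |f (x i)| ≤ B) :
    empRad N ((fun h : Ω → ℝ => fun y => f y * h y) '' F) x ≤ B * empRad N F x :=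
  empRad_mul_le_general N F x hF hbddF f B hB
end
end

section
/- Let Θ ⊆ ℝ^d × ℝ be compact, let σ : ℝ → ℝ be m-times continuously differentiable with σ and each derivative σ^{(j)} (j ≤ m) Lipschitz (i.e. σ ∈ W^{m+1,∞}), and let D_σ = {x ↦ σ(ω·x + b) : (ω, b) ∈ Θ}. Then for every multi-index α with |α| ≤ m there is a constant c (independent of N) such that for every probability measure μ on ℝ^d with bounded support and every N ≥ 1, the Rademacher complexity satisfies R_N(∂^α D_σ) ≤ c · N^{−1/2}, where ∂^α D_σ = {x ↦ ω^α σ^{(|α|)}(ω·x + b) : (ω, b) ∈ Θ}. -/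
/-!
The class `∂^α 𝔻_σ` is `{x ↦ c(θ) φ(ω·x + b)}` with `φ = σ^{(|α|)}` Lipschitz and
`|c(θ)| = |ω^α| ≤ B^{|α|}` on the bounded set `Θ`. At a fixed sample, the bounded coefficient is
removed by bounding `sup_θ |V(θ)|` by `sup V + sup (-V) + |V(θ₀)|`, where flipping all signs turns
`sup (-V)` into another copy of `sup V`. The Ledoux–Talagrand contraction, proved one sign at a
time, then replaces `φ` by `L • id`, leaving the affine class. Its Rademacher sums, and the
remaining term `|V(θ₀)|`, are controlled by Khintchine's inequality
`E_ξ |∑ ξ_i a_i| ≤ √N · max |a_i|`, a consequence of Cauchy–Schwarz and of the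
orthogonality of the signs.
-/

open MeasureTheory Set

noncomputable section

/-- The Rademacher complexity `R_N(F) = E_{x₁,…,x_N iid ∼ μ}[R̂_N(F; x)]`. -/
def RadN {Ω : Type*} [MeasurableSpace Ω] (μ : Measure Ω) [SigmaFinite μ] (N : ℕ)
    (F : Set (Ω → ℝ)) : ℝ :=
  ∫ x : Fin N → Ω, empRad N F x ∂(Measure.pi fun _ => μ)

section Rademacher

variable {ι : Type*} {n d : ℕ}

def boolSign (b : Bool) : ℝ := if b then 1 else -1

@[simp] lemma boolSign_true : boolSign true = 1 := rfl

@[simp] lemma boolSign_false : boolSign false = -1 := rfl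

@[simp] lemma boolSign_not (b : Bool) : boolSign (!b) = -boolSign b := by
  cases b <;> simp

@[simp] lemma abs_boolSign (b : Bool) : |boolSign b| = 1 := by
  cases b <;> simp

lemma sum_pi_bool_succ (f : (Fin (n + 1) → Bool) → ℝ) :
    ∑ ξ, f ξ = ∑ ξ : Fin n → Bool, (f (Fin.cons true ξ) + f (Fin.cons false ξ)) := by
  rw [← (Fin.consEquiv fun _ => Bool).sum_comp, Fintype.sum_prod_type, Fintype.sum_bool,
    ← Finset.sum_add_distrib]
  rfl

lemma sum_pi_bool_not (f : (Fin n → Bool) → ℝ) :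
    ∑ ξ : Fin n → Bool, f (fun i => !ξ i) = ∑ ξ, f ξ :=
  Equiv.sum_comp (Function.Involutive.toPerm (fun ξ : Fin n → Bool => fun i => !ξ i)
    fun ξ => by simp) f

lemma sum_sq_sum_boolSign_mul : ∀ {n : ℕ} (a : Fin n → ℝ),
    ∑ ξ : Fin n → Bool, (∑ i, boolSign (ξ i) * a i) ^ 2 = 2 ^ n * ∑ i, a i ^ 2
  | 0, a => by simp
  | n + 1, a => by
    simp only [sum_pi_bool_succ, Fin.sum_univ_succ, Fin.cons_zero, Fin.cons_succ,
      boolSign_true, boolSign_false]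
    calc _ = ∑ ξ : Fin n → Bool, (2 * a 0 ^ 2 + 2 * (∑ i, boolSign (ξ i) * a i.succ) ^ 2) :=
          Finset.sum_congr rfl fun ξ _ => by ring
      _ = _ := by
          rw [Finset.sum_add_distrib, ← Finset.mul_sum, ← Finset.mul_sum, sum_sq_sum_boolSign_mul]
          simp only [Finset.sum_const, Finset.card_univ, Fintype.card_fun, Fintype.card_bool,
            Fintype.card_fin, nsmul_eq_mul]
          push_cast
          ring

lemma sum_abs_sum_boolSign_mul_le (a : Fin n → ℝ) {M : ℝ} (hM : ∀ i, |a i| ≤ M) :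
    ∑ ξ : Fin n → Bool, |∑ i, boolSign (ξ i) * a i| ≤ 2 ^ n * (√n * M) := by
  have hM0 : 0 ≤ √n * M := by
    cases n with
    | zero => simp
    | succ n => exact mul_nonneg (Real.sqrt_nonneg _) ((abs_nonneg _).trans (hM 0))
  have hsq : ∑ i, a i ^ 2 ≤ n * M ^ 2 := by
    calc ∑ i, a i ^ 2 ≤ ∑ _i : Fin n, M ^ 2 :=
          Finset.sum_le_sum fun i _ => sq_le_sq' (abs_le.mp (hM i)).1 (abs_le.mp (hM i)).2
      _ = n * M ^ 2 := by simp
  have hcs := sq_sum_le_card_mul_sum_sq (s := Finset.univ)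
    (f := fun ξ : Fin n → Bool => |∑ i, boolSign (ξ i) * a i|)
  simp only [sq_abs, sum_sq_sum_boolSign_mul, Finset.card_univ, Fintype.card_fun,
    Fintype.card_bool, Fintype.card_fin] at hcs
  refine (pow_le_pow_iff_left₀ (by positivity) (by positivity) two_ne_zero).mp ?_
  calc _ ≤ _ := hcs
    _ ≤ (2 ^ n : ℕ) * (2 ^ n * (n * M ^ 2)) := by gcongr
    _ = _ := by rw [mul_pow, mul_pow, Real.sq_sqrt (Nat.cast_nonneg n)]; push_cast; ring

lemma LipschitzWith.abs_le_abs_zero_add {φ : ℝ → ℝ} {L : NNReal} (hφ : LipschitzWith L φ)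
    (t : ℝ) : |φ t| ≤ |φ 0| + L * |t| := by
  have := hφ.dist_le_mul t 0
  rw [Real.dist_eq, Real.dist_eq, sub_zero] at this
  linarith [abs_sub_abs_le_abs_sub (φ t) (φ 0)]

lemma bddAbove_range_of_abs_le {f : ι → ℝ} {c : ℝ} (h : ∀ θ, |f θ| ≤ c) :
    BddAbove (range f) :=
  ⟨c, by rintro _ ⟨θ, rfl⟩; exact (le_abs_self _).trans (h θ)⟩

lemma abs_le_ciSup_add_ciSup_neg_add_abs {f : ι → ℝ} (hf : BddAbove (range f))
    (hf' : BddAbove (range fun θ => -f θ)) (θ θ₀ : ι) :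
    |f θ| ≤ (⨆ θ, f θ) + (⨆ θ, -f θ) + |f θ₀| := by
  have := le_ciSup hf θ
  have := le_ciSup hf θ₀
  have := le_ciSup hf' θ
  have := le_ciSup hf' θ₀
  rw [abs_le]
  constructor <;> cases abs_cases (f θ₀) <;> linarith

lemma bddAbove_range_sum_boolSign_mul {g : ι → Fin n → ℝ} {K : ℝ}
    (hg : ∀ θ i, |g θ i| ≤ K) (ξ : Fin n → Bool) :
    BddAbove (range fun θ => ∑ i, boolSign (ξ i) * g θ i) := by
  refine ⟨n * K, ?_⟩
  rintro _ ⟨θ, rfl⟩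
  calc ∑ i, boolSign (ξ i) * g θ i ≤ ∑ _i : Fin n, K :=
        Finset.sum_le_sum fun i _ => (le_abs_self _).trans (by simpa [abs_mul] using hg θ i)
    _ = n * K := by simp

lemma iSup_add_iSup_sub_comp_le [Nonempty ι] {φ : ℝ → ℝ} {L : NNReal}
    (hφ : LipschitzWith L φ) {A u : ι → ℝ}
    (hplus : BddAbove (range fun θ => A θ + L * u θ))
    (hminus : BddAbove (range fun θ => A θ - L * u θ)) :
    (⨆ θ, A θ + φ (u θ)) + (⨆ θ, A θ - φ (u θ))
      ≤ (⨆ θ, A θ + L * u θ) + (⨆ θ, A θ - L * u θ) := by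
  refine ciSup_add_ciSup_le fun θ θ' => ?_
  have hlip : φ (u θ) - φ (u θ') ≤ L * |u θ - u θ'| := by
    have := hφ.dist_le_mul (u θ) (u θ')
    rw [Real.dist_eq, Real.dist_eq] at this
    exact (le_abs_self _).trans this
  rcases le_total (u θ') (u θ) with h | h
  · have := le_ciSup hplus θ
    have := le_ciSup hminus θ'
    rw [abs_of_nonneg (sub_nonneg.mpr h)] at hlip
    linarith
  · have := le_ciSup hplus θ'
    have := le_ciSup hminus θ
    rw [abs_of_nonpos (sub_nonpos.mpr h)] at hlip
    linarith

-- Ledoux–Talagrand contraction. The offset `A` absorbs the coordinate peeled off at each step.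
lemma sum_iSup_add_sum_boolSign_mul_comp_le [Nonempty ι] {φ : ℝ → ℝ} {L : NNReal}
    (hφ : LipschitzWith L φ) {K : ℝ} :
    ∀ {n : ℕ} (T : ι → Fin n → ℝ), (∀ θ i, |T θ i| ≤ K) → ∀ A : ι → ℝ, BddAbove (range A) →
      ∑ ξ : Fin n → Bool, ⨆ θ, (A θ + ∑ i, boolSign (ξ i) * φ (T θ i))
        ≤ ∑ ξ : Fin n → Bool, ⨆ θ, (A θ + ∑ i, boolSign (ξ i) * (L * T θ i))
  | 0, T, _, A, _ => by simp
  | n + 1, T, hT, A, hA => by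
    simp only [sum_pi_bool_succ, Fin.sum_univ_succ, Fin.cons_zero, Fin.cons_succ,
      boolSign_true, boolSign_false, one_mul, neg_one_mul]
    set Rφ : (Fin n → Bool) → ι → ℝ := fun ξ θ => ∑ i, boolSign (ξ i) * φ (T θ i.succ)
    have hφT : ∀ θ i, |φ (T θ i)| ≤ |φ 0| + L * K := fun θ i =>
      (hφ.abs_le_abs_zero_add _).trans (by gcongr; exact hT θ i)
    have hLT : ∀ θ, |(L : ℝ) * T θ 0| ≤ L * K := fun θ => by
      rw [abs_mul, NNReal.abs_eq]; gcongr; exact hT θ 0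
    have hplus := bddAbove_range_of_abs_le hLT
    have hminus := bddAbove_range_of_abs_le (f := fun θ => -((L : ℝ) * T θ 0))
      fun θ => (abs_neg _).trans_le (hLT θ)
    have hpair : ∀ ξ, (⨆ θ, A θ + (φ (T θ 0) + Rφ ξ θ)) + ⨆ θ, A θ + (-φ (T θ 0) + Rφ ξ θ)
        ≤ (⨆ θ, (A θ + L * T θ 0) + Rφ ξ θ) + ⨆ θ, (A θ + -(L * T θ 0)) + Rφ ξ θ := by
      intro ξ
      have hR := hA.range_add (bddAbove_range_sum_boolSign_mul (fun θ i => hφT θ i.succ) ξ)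
      calc _ = (⨆ θ, (A θ + Rφ ξ θ) + φ (T θ 0)) + ⨆ θ, (A θ + Rφ ξ θ) - φ (T θ 0) := by
            congr 1 <;> exact iSup_congr fun θ => by ring
        _ ≤ (⨆ θ, (A θ + Rφ ξ θ) + L * T θ 0) + ⨆ θ, (A θ + Rφ ξ θ) - L * T θ 0 :=
            iSup_add_iSup_sub_comp_le hφ (hR.range_add hplus) (hR.range_add hminus)
        _ = _ := by congr 1 <;> exact iSup_congr fun θ => by ring
    have hT' : ∀ θ i, |T θ (Fin.succ i)| ≤ K := fun θ i => hT θ i.succ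
    calc _ ≤ _ := Finset.sum_le_sum fun ξ _ => hpair ξ
      _ = _ := Finset.sum_add_distrib
      _ ≤ _ := add_le_add
          (sum_iSup_add_sum_boolSign_mul_comp_le hφ (fun θ i => T θ i.succ) hT' _
            (hA.range_add hplus))
          (sum_iSup_add_sum_boolSign_mul_comp_le hφ (fun θ i => T θ i.succ) hT' _
            (hA.range_add hminus))
      _ = _ := by
          rw [← Finset.sum_add_distrib]
          refine Finset.sum_congr rfl fun ξ _ => ?_
          congr 1 <;> exact iSup_congr fun θ => by ring

def rademacherSupSum (g : ι → Fin n → ℝ) : ℝ :=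
  ∑ ξ : Fin n → Bool, ⨆ θ, ∑ i, boolSign (ξ i) * g θ i

lemma rademacherSupSum_comp_le [Nonempty ι] {φ : ℝ → ℝ} {L : NNReal} (hφ : LipschitzWith L φ)
    (T : ι → Fin n → ℝ) {K : ℝ} (hT : ∀ θ i, |T θ i| ≤ K) :
    rademacherSupSum (fun θ i => φ (T θ i)) ≤ L * rademacherSupSum T := by
  have h := sum_iSup_add_sum_boolSign_mul_comp_le hφ T hT 0 (by simp)
  simp only [Pi.zero_apply, zero_add] at h
  rw [rademacherSupSum, rademacherSupSum, Finset.mul_sum]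
  refine h.trans_eq (Finset.sum_congr rfl fun ξ _ => ?_)
  rw [Real.mul_iSup_of_nonneg L.coe_nonneg]
  exact iSup_congr fun θ => by
    rw [Finset.mul_sum]; exact Finset.sum_congr rfl fun i _ => by ring

lemma rademacherSupSum_mul_le (c : ι → ℝ) {C : ℝ} (hc : ∀ θ, |c θ| ≤ C)
    (g : ι → Fin n → ℝ) {K : ℝ} (hg : ∀ θ i, |g θ i| ≤ K) (θ₀ : ι) :
    rademacherSupSum (fun θ i => c θ * g θ i)
      ≤ C * (2 * rademacherSupSum g + ∑ ξ : Fin n → Bool, |∑ i, boolSign (ξ i) * g θ₀ i|) := by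
  have : Nonempty ι := ⟨θ₀⟩
  have hC : 0 ≤ C := (abs_nonneg _).trans (hc θ₀)
  set V : (Fin n → Bool) → ι → ℝ := fun ξ θ => ∑ i, boolSign (ξ i) * g θ i
  have hV_not : ∀ ξ θ, V (fun i => !ξ i) θ = -V ξ θ := fun ξ θ => by
    simp only [V, boolSign_not, neg_mul, Finset.sum_neg_distrib]
  have hpt : ∀ ξ, (⨆ θ, ∑ i, boolSign (ξ i) * (c θ * g θ i))
      ≤ C * ((⨆ θ, V ξ θ) + (⨆ θ, V (fun i => !ξ i) θ) + |V ξ θ₀|) := by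
    intro ξ
    refine ciSup_le fun θ => ?_
    have hneg : BddAbove (range fun θ => -V ξ θ) := by
      simp_rw [← hV_not]; exact bddAbove_range_sum_boolSign_mul hg _
    have hV := abs_le_ciSup_add_ciSup_neg_add_abs (f := V ξ)
      (bddAbove_range_sum_boolSign_mul hg ξ) hneg θ θ₀
    simp only [← hV_not] at hV
    calc ∑ i, boolSign (ξ i) * (c θ * g θ i) = c θ * V ξ θ := by
          simp only [V, Finset.mul_sum]; exact Finset.sum_congr rfl fun i _ => by ring
      _ ≤ |c θ| * |V ξ θ| := (le_abs_self _).trans (abs_mul _ _).le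
      _ ≤ _ := mul_le_mul (hc θ) hV (abs_nonneg _) hC
  calc rademacherSupSum (fun θ i => c θ * g θ i)
      ≤ ∑ ξ : Fin n → Bool, C * ((⨆ θ, V ξ θ) + (⨆ θ, V (fun i => !ξ i) θ) + |V ξ θ₀|) :=
        Finset.sum_le_sum fun ξ _ => hpt ξ
    _ = _ := by
        rw [← Finset.mul_sum, Finset.sum_add_distrib, Finset.sum_add_distrib,
          sum_pi_bool_not fun ξ => ⨆ θ, V ξ θ]
        simp only [rademacherSupSum, V]
        ring

lemma abs_affine_le {ω y : Fin d → ℝ} {b B R : ℝ} (hω : ‖ω‖ ≤ B) (hb : |b| ≤ B) (hy : ‖y‖ ≤ R) :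
    |∑ j, ω j * y j + b| ≤ B * (d * R + 1) := by
  have hB : 0 ≤ B := (abs_nonneg _).trans hb
  have hj : ∀ j, |ω j * y j| ≤ B * R := fun j => by
    rw [abs_mul]
    exact mul_le_mul ((Real.norm_eq_abs _ ▸ norm_le_pi_norm ω j).trans hω)
      ((Real.norm_eq_abs _ ▸ norm_le_pi_norm y j).trans hy) (abs_nonneg _) hB
  calc |∑ j, ω j * y j + b| ≤ ∑ j, |ω j * y j| + |b| :=
        (abs_add_le _ _).trans (add_le_add_left (Finset.abs_sum_le_sum_abs _ _) _)
    _ ≤ ∑ _j : Fin d, B * R + B := add_le_add (Finset.sum_le_sum fun j _ => hj j) hb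
    _ = B * (d * R + 1) := by
        simp only [Finset.sum_const, Finset.card_univ, Fintype.card_fin, nsmul_eq_mul]; ring

lemma sum_boolSign_mul_affine (ξ : Fin n → Bool) (ω : Fin d → ℝ) (b : ℝ)
    (x : Fin n → Fin d → ℝ) :
    ∑ i, boolSign (ξ i) * (∑ j, ω j * x i j + b)
      = ∑ j, ω j * ∑ i, boolSign (ξ i) * x i j + b * ∑ i, boolSign (ξ i) * 1 := by
  simp only [mul_add, Finset.sum_add_distrib, Finset.mul_sum]
  rw [Finset.sum_comm]
  congr 1
  · exact Finset.sum_congr rfl fun _ _ => Finset.sum_congr rfl fun _ _ => by ring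
  · exact Finset.sum_congr rfl fun _ _ => by ring

lemma rademacherSupSum_affine_le [Nonempty ι] (ω : ι → Fin d → ℝ) (b : ι → ℝ) {B : ℝ}
    (hω : ∀ θ, ‖ω θ‖ ≤ B) (hb : ∀ θ, |b θ| ≤ B) (x : Fin n → Fin d → ℝ) {R : ℝ}
    (hx : ∀ i, ‖x i‖ ≤ R) :
    rademacherSupSum (fun θ i => ∑ j, ω θ j * x i j + b θ) ≤ 2 ^ n * (√n * (B * (d * R + 1))) := by
  have hB : 0 ≤ B := (abs_nonneg _).trans (hb (Classical.arbitrary ι))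
  have hpt : ∀ ξ : Fin n → Bool, (⨆ θ, ∑ i, boolSign (ξ i) * (∑ j, ω θ j * x i j + b θ))
      ≤ B * (∑ j, |∑ i, boolSign (ξ i) * x i j| + |∑ i, boolSign (ξ i) * 1|) := by
    intro ξ
    refine ciSup_le fun θ => ?_
    rw [sum_boolSign_mul_affine, mul_add, Finset.mul_sum _ _ B]
    have hωj : ∀ j, |ω θ j| ≤ B := fun j =>
      (Real.norm_eq_abs _ ▸ norm_le_pi_norm (ω θ) j).trans (hω θ)
    refine add_le_add (Finset.sum_le_sum fun j _ => ?_) ?_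
    · exact (le_abs_self _).trans ((abs_mul _ _).trans_le
        (mul_le_mul_of_nonneg_right (hωj j) (abs_nonneg _)))
    · exact (le_abs_self _).trans ((abs_mul _ _).trans_le
        (mul_le_mul_of_nonneg_right (hb θ) (abs_nonneg _)))
  have hxj : ∀ i j, |x i j| ≤ R := fun i j =>
    (Real.norm_eq_abs _ ▸ norm_le_pi_norm (x i) j).trans (hx i)
  calc rademacherSupSum (fun θ i => ∑ j, ω θ j * x i j + b θ)
      ≤ ∑ ξ : Fin n → Bool,
          B * (∑ j, |∑ i, boolSign (ξ i) * x i j| + |∑ i, boolSign (ξ i) * 1|) :=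
        Finset.sum_le_sum fun ξ _ => hpt ξ
    _ = B * (∑ j, ∑ ξ : Fin n → Bool, |∑ i, boolSign (ξ i) * x i j|
          + ∑ ξ : Fin n → Bool, |∑ i, boolSign (ξ i) * 1|) := by
        rw [← Finset.mul_sum, Finset.sum_add_distrib, Finset.sum_comm]
    _ ≤ B * (∑ _j : Fin d, 2 ^ n * (√n * R) + 2 ^ n * (√n * 1)) := by
        gcongr with j
        · exact sum_abs_sum_boolSign_mul_le _ fun i => hxj i j
        · exact sum_abs_sum_boolSign_mul_le _ fun i => by simp
    _ = _ := by simp only [Finset.sum_const, Finset.card_univ, Fintype.card_fin, nsmul_eq_mul]; ring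

lemma rademacherSupSum_ridge_le (ω : ι → Fin d → ℝ) (b c : ι → ℝ) {B C R : ℝ}
    (hB : 0 ≤ B) (hC : 0 ≤ C) (hR : 0 ≤ R) (hω : ∀ θ, ‖ω θ‖ ≤ B) (hb : ∀ θ, |b θ| ≤ B)
    (hc : ∀ θ, |c θ| ≤ C) {φ : ℝ → ℝ} {L : NNReal} (hφ : LipschitzWith L φ)
    (x : Fin n → Fin d → ℝ) (hx : ∀ i, ‖x i‖ ≤ R) :
    rademacherSupSum (fun θ i => c θ * φ (∑ j, ω θ j * x i j + b θ))
      ≤ 2 ^ n * (√n * (C * (3 * L * (B * (d * R + 1)) + |φ 0|))) := by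
  rcases isEmpty_or_nonempty ι with hι | hι
  · simp only [rademacherSupSum, Real.iSup_of_isEmpty, Finset.sum_const_zero]
    positivity
  obtain ⟨θ₀⟩ := id hι
  set U := B * (d * R + 1)
  set u : ι → Fin n → ℝ := fun θ i => ∑ j, ω θ j * x i j + b θ
  have hu : ∀ θ i, |u θ i| ≤ U := fun θ i => abs_affine_le (hω θ) (hb θ) (hx i)
  have hφu : ∀ θ i, |φ (u θ i)| ≤ |φ 0| + L * U := fun θ i =>
    (hφ.abs_le_abs_zero_add _).trans (by gcongr; exact hu θ i)
  calc rademacherSupSum (fun θ i => c θ * φ (u θ i))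
      ≤ C * (2 * rademacherSupSum (fun θ i => φ (u θ i))
          + ∑ ξ : Fin n → Bool, |∑ i, boolSign (ξ i) * φ (u θ₀ i)|) :=
        rademacherSupSum_mul_le c hc _ hφu θ₀
    _ ≤ C * (2 * (L * (2 ^ n * (√n * U))) + 2 ^ n * (√n * (|φ 0| + L * U))) := by
        gcongr
        · exact (rademacherSupSum_comp_le hφ u hu).trans
            (mul_le_mul_of_nonneg_left (rademacherSupSum_affine_le ω b hω hb x hx) L.coe_nonneg)
        · exact sum_abs_sum_boolSign_mul_le _ fun i => hφu θ₀ i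
    _ = _ := by ring

lemma empRad_image_eq {Ω : Type*} (N : ℕ) (f : ι → Ω → ℝ) (s : Set ι) (x : Fin N → Ω) :
    empRad N (f '' s) x
      = (2 ^ N : ℝ)⁻¹ * ((N : ℝ)⁻¹ * rademacherSupSum fun (θ : s) i => f θ (x i)) := by
  rw [empRad, rademacherSupSum, Finset.mul_sum (a := (N : ℝ)⁻¹)]
  congr 1
  refine Finset.sum_congr rfl fun ξ _ => ?_
  rw [Set.image_image, Set.image_eq_range, Real.mul_iSup_of_nonneg (by positivity)]
  rfl

lemma RadN_le_of_ae_empRad_le {Ω : Type*} [MeasurableSpace Ω] (μ : Measure Ω)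
    [IsProbabilityMeasure μ] {N : ℕ} {F : Set (Ω → ℝ)} {a : ℝ} (ha : 0 ≤ a)
    (h : ∀ᵐ x ∂(Measure.pi fun _ : Fin N => μ), empRad N F x ≤ a) : RadN μ N F ≤ a := by
  by_cases hint : Integrable (empRad N F) (Measure.pi fun _ : Fin N => μ)
  · simpa [RadN] using integral_mono_ae hint (integrable_const a) h
  · rw [RadN, integral_undef hint]
    exact ha

lemma ae_pi_forall_of_ae {Ω : Type*} [MeasurableSpace Ω] {μ : Measure Ω} [SigmaFinite μ]
    {N : ℕ} {p : Ω → Prop} (h : ∀ᵐ y ∂μ, p y) :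
    ∀ᵐ x ∂(Measure.pi fun _ : Fin N => μ), ∀ i, p (x i) :=
  ae_all_iff.2 fun _ => Measure.tendsto_eval_ae_ae.eventually h

lemma abs_prod_pow_le {ω : Fin d → ℝ} {B : ℝ} (hω : ‖ω‖ ≤ B) (α : Fin d → ℕ) :
    |∏ j, ω j ^ α j| ≤ B ^ ∑ j, α j := by
  rw [Finset.abs_prod, ← Finset.prod_pow_eq_pow_sum]
  exact Finset.prod_le_prod (fun j _ => abs_nonneg _) fun j _ => by
    rw [abs_pow]
    exact pow_le_pow_left₀ (abs_nonneg _)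
      ((Real.norm_eq_abs _ ▸ norm_le_pi_norm ω j).trans hω) _

end Rademacher

theorem rademacher_bound_nn_dictionary_derivatives_general
    (d m : ℕ)
    (Θ : Set ((Fin d → ℝ) × ℝ)) (hΘ : IsCompact Θ)
    (σ : ℝ → ℝ)
    (hLip : ∀ j : ℕ, j ≤ m → ∃ Lj : NNReal, LipschitzWith Lj (iteratedDeriv j σ))
    (α : Fin d → ℕ) (hα : (∑ i, α i) ≤ m) (R : ℝ) :
    ∃ c : ℝ, ∀ (μ : Measure (Fin d → ℝ)) (_hprob : IsProbabilityMeasure μ)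
      (_hsupp : ∀ᵐ x ∂μ, ‖x‖ ≤ R),
      ∀ N : ℕ, 1 ≤ N →
        RadN μ N ((fun p : (Fin d → ℝ) × ℝ => fun x : Fin d → ℝ =>
            (∏ i, p.1 i ^ α i) * iteratedDeriv (∑ i, α i) σ ((∑ i, p.1 i * x i) + p.2)) '' Θ)
          ≤ c / Real.sqrt N := by
  obtain ⟨L, hφ⟩ := hLip _ hα
  obtain ⟨B₀, hB₀⟩ := hΘ.isBounded.exists_norm_le
  set B := max B₀ 0
  have hΘB : ∀ θ : Θ, ‖(θ : (Fin d → ℝ) × ℝ)‖ ≤ B := fun θ => (hB₀ θ θ.2).trans (le_max_left _ _)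
  set C := B ^ ∑ i, α i
  set K := C * (3 * L * (B * (d * max R 0 + 1)) + |iteratedDeriv (∑ i, α i) σ 0|)
  refine ⟨K, fun μ _ hsupp N hN => RadN_le_of_ae_empRad_le μ (by positivity) ?_⟩
  filter_upwards [ae_pi_forall_of_ae hsupp] with x hx
  rw [empRad_image_eq]
  have hsum := rademacherSupSum_ridge_le (fun θ : Θ => θ.1.1) (fun θ => θ.1.2)
    (fun θ => ∏ i, θ.1.1 i ^ α i) (le_max_right _ _) (by positivity) (le_max_right R 0)
    (fun θ => (norm_fst_le _).trans (hΘB θ))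
    (fun θ => (Real.norm_eq_abs _ ▸ norm_snd_le _).trans (hΘB θ))
    (fun θ => abs_prod_pow_le ((norm_fst_le _).trans (hΘB θ)) α) hφ x
    (fun i => (hx i).trans (le_max_left R 0))
  calc _ ≤ (2 ^ N : ℝ)⁻¹ * ((N : ℝ)⁻¹ * (2 ^ N * (√N * K))) := by gcongr
    _ = K / √N := by
        have hN' : (0 : ℝ) < N := by exact_mod_cast hN
        field_simp
        rw [Real.sq_sqrt hN'.le]

/-- **`N^{−1/2}` Rademacher complexity bound for derivatives of shallow neural network
dictionaries.** Let `Θ ⊆ ℝ^d × ℝ` be compact and `σ : ℝ → ℝ` be `m`-times continuously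
differentiable with `σ` and each derivative `σ^{(j)}` (`j ≤ m`) Lipschitz (i.e.
`σ ∈ W^{m+1,∞}`), and let `𝔻_σ = {x ↦ σ(ω·x + b) : (ω, b) ∈ Θ}`. Then for every
multi-index `α` with `|α| ≤ m` and every support radius `R`, there is a constant `c`
(independent of `N`) such that for every probability measure `μ` on `ℝ^d` supported in the
ball of radius `R` and every `N ≥ 1`, `R_N(∂^α 𝔻_σ) ≤ c·N^{−1/2}`, where
`∂^α 𝔻_σ = {x ↦ ω^α σ^{(|α|)}(ω·x + b) : (ω, b) ∈ Θ}`. -/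
theorem rademacher_bound_nn_dictionary_derivatives
    (d m : ℕ)
    (Θ : Set ((Fin d → ℝ) × ℝ)) (hΘ : IsCompact Θ)
    (σ : ℝ → ℝ) (hσ : ContDiff ℝ m σ)
    (hLip : ∀ j : ℕ, j ≤ m → ∃ Lj : NNReal, LipschitzWith Lj (iteratedDeriv j σ))
    (α : Fin d → ℕ) (hα : (∑ i, α i) ≤ m) (R : ℝ) :
    ∃ c : ℝ, ∀ (μ : Measure (Fin d → ℝ)) (_hprob : IsProbabilityMeasure μ)
      (_hsupp : ∀ᵐ x ∂μ, ‖x‖ ≤ R),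
      ∀ N : ℕ, 1 ≤ N →
        RadN μ N ((fun p : (Fin d → ℝ) × ℝ => fun x : Fin d → ℝ =>
            (∏ i, p.1 i ^ α i) * iteratedDeriv (∑ i, α i) σ ((∑ i, p.1 i * x i) + p.2)) '' Θ)
          ≤ c / Real.sqrt N :=
  rademacher_bound_nn_dictionary_derivatives_general d m Θ hΘ σ hLip α hα R
end
end

section
/- Let (Ω, μ) be a probability space and F a countable set of μ-integrable real-valued functions on Ω such that the relevant suprema are integrable. Then E_{x_1,…,x_N iid ∼ μ}[ sup_{h∈F} |(1/N) Σ_{i=1}^N h(x_i) − ∫_Ω h dμ| ] ≤ 2 · E_{x_1,…,x_N iid ∼ μ} [ 2^{−N} Σ_{ξ ∈ {−1,1}^N} sup_{h∈F} |(1/N) Σ_{i=1}^N ξ_i h(x_i)| ], i.e. the expected uniform deviation between empirical averages and expectations over the class F is bounded by twice the Rademacher complexity of F (with the absolute value inside the supremum). -/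
/-!
Draw an independent ghost sample `y`. Since `empiricalMean h y` has mean `∫ h ∂μ`, Jensen's
inequality bounds `E_x sup_h |empiricalMean h x - ∫ h ∂μ|` by
`E_{x,y} sup_h |empiricalMean h x - empiricalMean h y|`. Exchanging `x i` and `y i` preserves the
law of `(x, y)` and flips the sign of the `i`-th summand, so for every sign vector `ξ` this equals
`E_{x,y} sup_h |rademacherMean ξ h x - rademacherMean ξ h y|`, which the triangle inequality
bounds by `2 E_x sup_h |rademacherMean ξ h x|`. Averaging over `ξ` gives the claim.
Countability of the class makes every supremum a.e.-measurable.
-/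

open MeasureTheory Set

noncomputable section

section Suprema

variable {ι : Type*} {f g : ι → ℝ}

lemma abs_sub_le_ciSup_abs_add (hf : BddAbove (range fun k => |f k|))
    (hg : BddAbove (range fun k => |g k|)) (k : ι) :
    |f k - g k| ≤ (⨆ k, |f k|) + ⨆ k, |g k| :=
  (abs_sub _ _).trans (add_le_add (le_ciSup hf k) (le_ciSup hg k))

lemma bddAbove_range_abs_sub (hf : BddAbove (range fun k => |f k|))
    (hg : BddAbove (range fun k => |g k|)) : BddAbove (range fun k => |f k - g k|) :=
  ⟨_, forall_mem_range.2 (abs_sub_le_ciSup_abs_add hf hg)⟩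

lemma ciSup_abs_sub_le [Nonempty ι] (hf : BddAbove (range fun k => |f k|))
    (hg : BddAbove (range fun k => |g k|)) :
    ⨆ k, |f k - g k| ≤ (⨆ k, |f k|) + ⨆ k, |g k| :=
  ciSup_le (abs_sub_le_ciSup_abs_add hf hg)

end Suprema

section Integrals

variable {α ι : Type*} [MeasurableSpace α] {ρ : Measure α}

lemma MeasureTheory.AEStronglyMeasurable.iSup_real [Countable ι] {f : ι → α → ℝ}
    (hf : ∀ k, AEStronglyMeasurable (f k) ρ) :
    AEStronglyMeasurable (fun x => ⨆ k, f k x) ρ :=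
  (AEMeasurable.iSup fun k => (hf k).aemeasurable).aestronglyMeasurable

lemma ciSup_abs_integral_le_integral_ciSup_abs [Nonempty ι] {Z : ι → α → ℝ}
    (hbdd : ∀ x, BddAbove (range fun k => |Z k x|))
    (hint : Integrable (fun x => ⨆ k, |Z k x|) ρ) :
    ⨆ k, |∫ x, Z k x ∂ρ| ≤ ∫ x, ⨆ k, |Z k x| ∂ρ :=
  ciSup_le fun k => (abs_integral_le_integral_abs).trans <|
    integral_mono_of_nonneg (ae_of_all _ fun _ => abs_nonneg _) hint
      (ae_of_all _ fun x => le_ciSup (hbdd x) k)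

lemma MeasureTheory.Integrable.of_sum_of_nonneg {κ : Type*} {s : Finset κ} {f : κ → α → ℝ}
    (hsum : Integrable (fun x => ∑ j ∈ s, f j x) ρ)
    (hf : ∀ j ∈ s, AEStronglyMeasurable (f j) ρ) (hnn : ∀ j ∈ s, ∀ x, 0 ≤ f j x)
    {j : κ} (hj : j ∈ s) : Integrable (f j) ρ :=
  hsum.mono' (hf j hj) <| ae_of_all _ fun x => by
    rw [Real.norm_eq_abs, abs_of_nonneg (hnn j hj x)]
    exact Finset.single_le_sum (fun i hi => hnn i hi x) hj

end Integrals

section TwoSample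

variable {α ι : Type*} [MeasurableSpace α] {P : Measure α} [IsProbabilityMeasure P]
  [Countable ι] [Nonempty ι] {r : ι → α → ℝ}

lemma integrable_iSup_abs_sub_prod (hr : ∀ k, AEStronglyMeasurable (r k) P)
    (hbdd : ∀ x, BddAbove (range fun k => |r k x|))
    (hint : Integrable (fun x => ⨆ k, |r k x|) P) :
    Integrable (fun p : α × α => ⨆ k, |r k p.1 - r k p.2|) (P.prod P) := by
  refine (hint.comp_fst P |>.add (hint.comp_snd P)).mono'
    (AEStronglyMeasurable.iSup_real fun k =>
      continuous_abs.comp_aestronglyMeasurable ((hr k).comp_fst.sub (hr k).comp_snd))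
    (ae_of_all _ fun p => ?_)
  rw [Real.norm_eq_abs, abs_of_nonneg (Real.iSup_nonneg fun k => abs_nonneg _)]
  exact ciSup_abs_sub_le (hbdd p.1) (hbdd p.2)

lemma integral_iSup_abs_sub_prod_le (hr : ∀ k, AEStronglyMeasurable (r k) P)
    (hbdd : ∀ x, BddAbove (range fun k => |r k x|))
    (hint : Integrable (fun x => ⨆ k, |r k x|) P) :
    ∫ p : α × α, ⨆ k, |r k p.1 - r k p.2| ∂(P.prod P) ≤ 2 * ∫ x, ⨆ k, |r k x| ∂P := by
  calc ∫ p : α × α, ⨆ k, |r k p.1 - r k p.2| ∂(P.prod P)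
      ≤ ∫ p : α × α, ((⨆ k, |r k p.1|) + ⨆ k, |r k p.2|) ∂(P.prod P) :=
        integral_mono (integrable_iSup_abs_sub_prod hr hbdd hint)
          (hint.comp_fst P |>.add (hint.comp_snd P))
          fun p => ciSup_abs_sub_le (hbdd p.1) (hbdd p.2)
    _ = 2 * ∫ x, ⨆ k, |r k x| ∂P := by
        rw [integral_add (hint.comp_fst P) (hint.comp_snd P),
          integral_fun_fst (fun x => ⨆ k, |r k x|), integral_fun_snd (fun x => ⨆ k, |r k x|)]
        simp only [probReal_univ, one_smul]
        ring

end TwoSample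

section CoordSwap

variable {α ι : Type*} [MeasurableSpace α]

def coordSwap (ξ : ι → Bool) : (ι → α) × (ι → α) ≃ᵐ (ι → α) × (ι → α) :=
  (MeasurableEquiv.arrowProdEquivProdArrow α α ι).symm.trans <|
    (MeasurableEquiv.piCongrRight fun i =>
      if ξ i then MeasurableEquiv.refl (α × α) else MeasurableEquiv.prodComm).trans
    (MeasurableEquiv.arrowProdEquivProdArrow α α ι)

lemma coordSwap_apply (ξ : ι → Bool) (p : (ι → α) × (ι → α)) :
    coordSwap ξ p =
      (fun i => if ξ i then p.1 i else p.2 i, fun i => if ξ i then p.2 i else p.1 i) := by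
  ext i <;> cases h : ξ i <;>
    simp [coordSwap, MeasurableEquiv.arrowProdEquivProdArrow, MeasurableEquiv.piCongrRight,
      Equiv.arrowProdEquivProdArrow, MeasurableEquiv.prodComm, h]

lemma measurePreserving_coordSwap [Fintype ι] (μ : Measure α) [SigmaFinite μ] (ξ : ι → Bool) :
    MeasurePreserving (coordSwap ξ) ((Measure.pi fun _ => μ).prod (Measure.pi fun _ => μ))
      ((Measure.pi fun _ => μ).prod (Measure.pi fun _ => μ)) := by
  have hE := measurePreserving_arrowProdEquivProdArrow α α ι (fun _ => μ) (fun _ => μ)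
  refine hE.comp (MeasurePreserving.comp ?_ hE.symm)
  refine measurePreserving_pi (fun _ => μ.prod μ) (fun _ => μ.prod μ)
    (f := fun i => ⇑(if ξ i then MeasurableEquiv.refl (α × α) else MeasurableEquiv.prodComm))
    fun i => ?_
  cases ξ i
  · exact Measure.measurePreserving_swap
  · exact MeasurePreserving.id _

end CoordSwap

section EmpiricalMean

variable {Ω : Type*} {N : ℕ} {h : Ω → ℝ}

def empiricalMean (h : Ω → ℝ) (x : Fin N → Ω) : ℝ := (N : ℝ)⁻¹ * ∑ i, h (x i)

def rademacherMean (ξ : Fin N → Bool) (h : Ω → ℝ) (x : Fin N → Ω) : ℝ :=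
  (N : ℝ)⁻¹ * ∑ i, (if ξ i then (1 : ℝ) else -1) * h (x i)

variable [MeasurableSpace Ω]

lemma empiricalMean_coordSwap_sub (ξ : Fin N → Bool) (p : (Fin N → Ω) × (Fin N → Ω)) :
    empiricalMean h (coordSwap ξ p).1 - empiricalMean h (coordSwap ξ p).2 =
      rademacherMean ξ h p.1 - rademacherMean ξ h p.2 := by
  simp only [empiricalMean, rademacherMean, coordSwap_apply, ← mul_sub,
    ← Finset.sum_sub_distrib]
  congr 1
  refine Finset.sum_congr rfl fun i _ => ?_
  cases ξ i <;> simp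

variable {μ : Measure Ω} [IsProbabilityMeasure μ]

lemma integrable_empiricalMean (hh : Integrable h μ) :
    Integrable (empiricalMean h) (Measure.pi fun _ : Fin N => μ) :=
  (integrable_finsetSum _ fun _ _ => integrable_comp_eval hh).const_mul _

lemma integral_empiricalMean (hN : N ≠ 0) (hh : Integrable h μ) :
    ∫ x, empiricalMean h x ∂(Measure.pi fun _ : Fin N => μ) = ∫ y, h y ∂μ := by
  simp only [empiricalMean]
  rw [integral_const_mul, integral_finsetSum _ fun _ _ => integrable_comp_eval hh,
    Finset.sum_congr rfl fun _ _ => integral_comp_eval (μ := fun _ => μ) hh.aestronglyMeasurable]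
  simp only [Finset.sum_const, Finset.card_univ, Fintype.card_fin, nsmul_eq_mul]
  field_simp

lemma aestronglyMeasurable_rademacherMean (ξ : Fin N → Bool) (hh : AEStronglyMeasurable h μ) :
    AEStronglyMeasurable (rademacherMean ξ h) (Measure.pi fun _ : Fin N => μ) :=
  (Finset.aestronglyMeasurable_fun_sum _ fun i _ =>
    (hh.comp_measurePreserving (measurePreserving_eval _ i)).const_mul _).const_mul _

end EmpiricalMean

section Symmetrization

variable {Ω ι : Type*} [MeasurableSpace Ω] {μ : Measure Ω} [IsProbabilityMeasure μ] {N : ℕ}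
  {φ : ι → Ω → ℝ}

lemma integral_prod_iSup_abs_empiricalMean_sub_eq_rademacherMean (ξ : Fin N → Bool) :
    ∫ p, ⨆ k, |empiricalMean (φ k) p.1 - empiricalMean (φ k) p.2|
        ∂((Measure.pi fun _ : Fin N => μ).prod (Measure.pi fun _ : Fin N => μ)) =
      ∫ p, ⨆ k, |rademacherMean ξ (φ k) p.1 - rademacherMean ξ (φ k) p.2|
        ∂((Measure.pi fun _ : Fin N => μ).prod (Measure.pi fun _ : Fin N => μ)) := by
  simp only [← empiricalMean_coordSwap_sub ξ]
  exact ((measurePreserving_coordSwap μ ξ).integral_comp' (g := fun p =>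
    ⨆ k, |empiricalMean (φ k) p.1 - empiricalMean (φ k) p.2|)).symm

variable [Countable ι] [Nonempty ι]

lemma integral_iSup_abs_empiricalMean_sub_le_integral_prod (hN : N ≠ 0)
    (hφ : ∀ k, Integrable (φ k) μ)
    (hbdd : ∀ x : Fin N → Ω, BddAbove (range fun k => |empiricalMean (φ k) x - ∫ y, φ k y ∂μ|))
    (hint : Integrable (fun x => ⨆ k, |empiricalMean (φ k) x - ∫ y, φ k y ∂μ|)
      (Measure.pi fun _ : Fin N => μ)) :
    ∫ x, ⨆ k, |empiricalMean (φ k) x - ∫ y, φ k y ∂μ| ∂(Measure.pi fun _ : Fin N => μ) ≤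
      ∫ p, ⨆ k, |empiricalMean (φ k) p.1 - empiricalMean (φ k) p.2|
        ∂((Measure.pi fun _ : Fin N => μ).prod (Measure.pi fun _ : Fin N => μ)) := by
  set P := Measure.pi fun _ : Fin N => μ
  have hcenter : ∀ k (x y : Fin N → Ω), empiricalMean (φ k) x - empiricalMean (φ k) y =
      (empiricalMean (φ k) x - ∫ z, φ k z ∂μ) - (empiricalMean (φ k) y - ∫ z, φ k z ∂μ) :=
    fun k x y => (sub_sub_sub_cancel_right _ _ _).symm
  have hG : Integrable (fun p => ⨆ k, |empiricalMean (φ k) p.1 - empiricalMean (φ k) p.2|)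
      (P.prod P) := by
    simp only [hcenter]
    exact integrable_iSup_abs_sub_prod
      (fun k => ((integrable_empiricalMean (hφ k)).sub (integrable_const _)).aestronglyMeasurable)
      hbdd hint
  rw [integral_prod _ hG]
  refine integral_mono_ae hint hG.integral_prod_left ?_
  filter_upwards [hG.prod_right_ae] with x hx
  have hmean : ∀ k, empiricalMean (φ k) x - ∫ y, φ k y ∂μ =
      ∫ y, (empiricalMean (φ k) x - empiricalMean (φ k) y) ∂P := fun k => by
    rw [integral_sub (integrable_const _) (integrable_empiricalMean (hφ k)), integral_const,
      integral_empiricalMean hN (hφ k), probReal_univ, one_smul]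
  simp only [hmean]
  exact ciSup_abs_integral_le_integral_ciSup_abs
    (fun y => by simpa only [hcenter] using bddAbove_range_abs_sub (hbdd x) (hbdd y)) hx

theorem integral_iSup_abs_empiricalMean_sub_le_two_mul_rademacher (hN : N ≠ 0)
    (hφ : ∀ k, Integrable (φ k) μ)
    (hbdd₁ : ∀ x : Fin N → Ω, BddAbove (range fun k => |empiricalMean (φ k) x - ∫ y, φ k y ∂μ|))
    (hbdd₂ : ∀ (x : Fin N → Ω) ξ, BddAbove (range fun k => |rademacherMean ξ (φ k) x|))
    (hint₁ : Integrable (fun x => ⨆ k, |empiricalMean (φ k) x - ∫ y, φ k y ∂μ|)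
      (Measure.pi fun _ : Fin N => μ))
    (hint₂ : Integrable (fun x => (2 ^ N : ℝ)⁻¹ * ∑ ξ : Fin N → Bool,
      ⨆ k, |rademacherMean ξ (φ k) x|) (Measure.pi fun _ : Fin N => μ)) :
    ∫ x, ⨆ k, |empiricalMean (φ k) x - ∫ y, φ k y ∂μ| ∂(Measure.pi fun _ : Fin N => μ) ≤
      2 * ∫ x, (2 ^ N : ℝ)⁻¹ * ∑ ξ : Fin N → Bool, ⨆ k, |rademacherMean ξ (φ k) x|
        ∂(Measure.pi fun _ : Fin N => μ) := by
  set P := Measure.pi fun _ : Fin N => μ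
  have hR_meas : ∀ ξ k, AEStronglyMeasurable (rademacherMean ξ (φ k)) P :=
    fun ξ k => aestronglyMeasurable_rademacherMean ξ (hφ k).aestronglyMeasurable
  have hR : ∀ ξ, Integrable (fun x => ⨆ k, |rademacherMean ξ (φ k) x|) P := fun ξ =>
    ((integrable_const_mul_iff (by simp) _).1 hint₂).of_sum_of_nonneg
      (fun ξ _ => AEStronglyMeasurable.iSup_real fun k =>
        continuous_abs.comp_aestronglyMeasurable (hR_meas ξ k))
      (fun _ _ _ => Real.iSup_nonneg fun _ => abs_nonneg _) (Finset.mem_univ ξ)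
  calc ∫ x, ⨆ k, |empiricalMean (φ k) x - ∫ y, φ k y ∂μ| ∂P
      ≤ ∫ p, ⨆ k, |empiricalMean (φ k) p.1 - empiricalMean (φ k) p.2| ∂(P.prod P) :=
        integral_iSup_abs_empiricalMean_sub_le_integral_prod hN hφ hbdd₁ hint₁
    _ = (2 ^ N : ℝ)⁻¹ * ∑ _ξ : Fin N → Bool,
          ∫ p, ⨆ k, |empiricalMean (φ k) p.1 - empiricalMean (φ k) p.2| ∂(P.prod P) := by
        simp only [Finset.sum_const, Finset.card_univ, Fintype.card_fun, Fintype.card_bool,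
          Fintype.card_fin, nsmul_eq_mul]
        push_cast
        field_simp
    _ = (2 ^ N : ℝ)⁻¹ * ∑ ξ : Fin N → Bool,
          ∫ p, ⨆ k, |rademacherMean ξ (φ k) p.1 - rademacherMean ξ (φ k) p.2| ∂(P.prod P) := by
        congr 1
        exact Finset.sum_congr rfl fun ξ _ =>
          integral_prod_iSup_abs_empiricalMean_sub_eq_rademacherMean ξ
    _ ≤ (2 ^ N : ℝ)⁻¹ * ∑ ξ : Fin N → Bool, 2 * ∫ x, ⨆ k, |rademacherMean ξ (φ k) x| ∂P := by
        gcongr with ξ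
        exact integral_iSup_abs_sub_prod_le (hR_meas ξ) (hbdd₂ · ξ) (hR ξ)
    _ = 2 * ∫ x, (2 ^ N : ℝ)⁻¹ * ∑ ξ : Fin N → Bool, ⨆ k, |rademacherMean ξ (φ k) x| ∂P := by
        rw [integral_const_mul, integral_finsetSum _ fun ξ _ => hR ξ, ← Finset.mul_sum]
        ring

end Symmetrization

/-- **Symmetrization inequality.**
Let `(Ω, μ)` be a probability space and `F` a countable set of `μ`-integrable real-valued
functions on `Ω` such that the relevant suprema are finite and integrable. Then the expected
uniform deviation between empirical averages and expectations over the class `F` is bounded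
by twice the (two-sided) Rademacher complexity of `F`:
`E[sup_{h∈F} |(1/N) ∑_i h(x_i) − ∫ h dμ|]
  ≤ 2 E[2^{−N} ∑_{ξ∈{−1,1}^N} sup_{h∈F} |(1/N) ∑_i ξ_i h(x_i)|]`. -/
theorem symmetrization_inequality
    {Ω : Type*} [MeasurableSpace Ω] (μ : Measure Ω) [IsProbabilityMeasure μ]
    (F : Set (Ω → ℝ)) (hFc : F.Countable) (hFne : F.Nonempty)
    (hFint : ∀ h ∈ F, Integrable h μ)
    (N : ℕ) (hN : 1 ≤ N)
    (hbdd1 : ∀ x : Fin N → Ω, BddAbove ((fun h : Ω → ℝ =>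
      |(N : ℝ)⁻¹ * ∑ i, h (x i) - ∫ y, h y ∂μ|) '' F))
    (hbdd2 : ∀ (x : Fin N → Ω) (ξ : Fin N → Bool), BddAbove ((fun h : Ω → ℝ =>
      |(N : ℝ)⁻¹ * ∑ i, (if ξ i then (1 : ℝ) else -1) * h (x i)|) '' F))
    (hint1 : Integrable (fun x : Fin N → Ω =>
      sSup ((fun h : Ω → ℝ => |(N : ℝ)⁻¹ * ∑ i, h (x i) - ∫ y, h y ∂μ|) '' F))
      (Measure.pi fun _ => μ))
    (hint2 : Integrable (fun x : Fin N → Ω =>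
      (2 ^ N : ℝ)⁻¹ * ∑ ξ : Fin N → Bool,
        sSup ((fun h : Ω → ℝ =>
          |(N : ℝ)⁻¹ * ∑ i, (if ξ i then (1 : ℝ) else -1) * h (x i)|) '' F))
      (Measure.pi fun _ => μ)) :
    (∫ x : Fin N → Ω,
        sSup ((fun h : Ω → ℝ => |(N : ℝ)⁻¹ * ∑ i, h (x i) - ∫ y, h y ∂μ|) '' F)
        ∂(Measure.pi fun _ => μ))
      ≤ 2 * ∫ x : Fin N → Ω,
          (2 ^ N : ℝ)⁻¹ * ∑ ξ : Fin N → Bool,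
            sSup ((fun h : Ω → ℝ =>
              |(N : ℝ)⁻¹ * ∑ i, (if ξ i then (1 : ℝ) else -1) * h (x i)|) '' F)
          ∂(Measure.pi fun _ => μ) := by
  have := hFc.to_subtype
  have := hFne.to_subtype
  simp only [image_eq_range] at hbdd1 hbdd2 hint1 hint2 ⊢
  exact integral_iSup_abs_empiricalMean_sub_le_two_mul_rademacher (φ := Subtype.val)
    (Nat.one_le_iff_ne_zero.mp hN) (fun h => hFint h h.2) hbdd1 hbdd2 hint1 hint2
end
end

section
/- Let H be a real Hilbert space and D ⊆ H a dictionary with sup_{d∈D} ‖d‖_H ≤ C_D < ∞. Then for every M > 0, every f in M times the closure of the convex hull of D ∪ (−D), and every n ≥ 1, there exist d_1, …, d_n ∈ D and real coefficients a_1, …, a_n with Σ_{i=1}^n |a_i| ≤ M such that ‖f − Σ_{i=1}^n a_i d_i‖_H ≤ C_D M n^{−1/2}. Equivalently, inf_{f_n ∈ Σ_{n,M}(D)} ‖f − f_n‖_H ≤ C_D ‖f‖_{K1(D)} n^{−1/2} with M = ‖f‖_{K1(D)}. -/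
/-!
Maurey's empirical method. If `f` is a convex combination of points of `s` of norm at most `C`,
then `n` independent samples `z i` from that combination satisfy
`𝔼 ‖∑ i, (z i - f)‖² = n (𝔼 ‖z‖² - ‖f‖²) ≤ n (C² - ‖f‖²)`. We derandomise this greedily: given the
partial sum `a`, some `x ∈ s` satisfies `⟪a - f, x - f⟫ ≤ 0`, so adding `x - f` raises `‖a‖²` by at
most `C² - ‖f‖²`. For `f ≠ 0` in the closure of the hull the slack `‖f‖² > 0` absorbs the
approximation of `f` by hull points, and for `f = 0` the zero expansion is already good enough.
-/

open Set Pointwise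

noncomputable section

open scoped InnerProductSpace

section MaureySampling

variable {H : Type*} [NormedAddCommGroup H] [InnerProductSpace ℝ H]

theorem exists_norm_add_sub_sq_le_of_mem_convexHull {s : Set H} {C : ℝ}
    (hC : ∀ x ∈ s, ‖x‖ ≤ C) {f : H} (hf : f ∈ convexHull ℝ s) (a : H) :
    ∃ x ∈ s, ‖a + (x - f)‖ ^ 2 ≤ ‖a‖ ^ 2 + (C ^ 2 - ‖f‖ ^ 2) := by
  obtain ⟨x, hx, hle⟩ := ((innerSL ℝ (a - f)).toLinearMap.concaveOn
    (convex_convexHull ℝ s)).exists_le_of_mem_convexHull (subset_convexHull ℝ s) hf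
  have hinner : ⟪a - f, x⟫_ℝ ≤ ⟪a - f, f⟫_ℝ := hle
  have hexpand : ‖a + (x - f)‖ ^ 2
      = ‖a‖ ^ 2 + (‖x‖ ^ 2 - ‖f‖ ^ 2) + 2 * (⟪a - f, x⟫_ℝ - ⟪a - f, f⟫_ℝ) := by
    rw [norm_add_sq_real, norm_sub_sq_real, inner_sub_right, inner_sub_left, inner_sub_left,
      real_inner_comm x f, real_inner_self_eq_norm_sq]
    ring
  have hx2 : ‖x‖ ^ 2 ≤ C ^ 2 := pow_le_pow_left₀ (norm_nonneg x) (hC x hx) 2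
  exact ⟨x, hx, by rw [hexpand]; linarith⟩

theorem exists_norm_sum_sub_sq_le_of_mem_convexHull {s : Set H} {C : ℝ}
    (hC : ∀ x ∈ s, ‖x‖ ≤ C) {f : H} (hf : f ∈ convexHull ℝ s) (n : ℕ) :
    ∃ z : Fin n → H, (∀ i, z i ∈ s) ∧ ‖∑ i, (z i - f)‖ ^ 2 ≤ n * (C ^ 2 - ‖f‖ ^ 2) := by
  induction n with
  | zero => exact ⟨Fin.elim0, Fin.rec0, by simp⟩
  | succ n ih =>
    obtain ⟨z, hz, hbound⟩ := ih
    obtain ⟨x, hx, hstep⟩ := exists_norm_add_sub_sq_le_of_mem_convexHull hC hf (∑ i, (z i - f))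
    refine ⟨Fin.cons x z, Fin.cases hx hz, ?_⟩
    simp only [Fin.sum_univ_succ, Fin.cons_zero, Fin.cons_succ, Nat.cast_succ]
    rw [add_comm]
    linarith

theorem exists_norm_sum_sub_le_of_mem_closure_convexHull {s : Set H} {C : ℝ}
    (hC : ∀ x ∈ s, ‖x‖ ≤ C) {f : H} (hf : f ∈ closure (convexHull ℝ s)) (hf0 : f ≠ 0)
    {n : ℕ} (hn : 0 < n) :
    ∃ z : Fin n → H, (∀ i, z i ∈ s) ∧ ‖∑ i, (z i - f)‖ ≤ C * √n := by
  have hfC : ‖f‖ ≤ C := by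
    have hsub : closure (convexHull ℝ s) ⊆ Metric.closedBall 0 C :=
      closure_minimal (convexHull_min (fun x hx => mem_closedBall_zero_iff.2 (hC x hx))
        (convex_closedBall 0 C)) Metric.isClosed_closedBall
    exact mem_closedBall_zero_iff.1 (hsub hf)
  have hf_pos : 0 < ‖f‖ := norm_pos_iff.2 hf0
  have hn' : (0 : ℝ) < n := Nat.cast_pos.2 hn
  -- `φ h` bounds the error when the points are sampled from a hull point `h` instead of `f`.
  set φ : H → ℝ := fun h => √(n * (C ^ 2 - ‖h‖ ^ 2)) + n * ‖h - f‖ with hφ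
  have hφf : φ f < C * √n := by
    have hslack : n * (C ^ 2 - ‖f‖ ^ 2) < C ^ 2 * n := by nlinarith [pow_pos hf_pos 2]
    have hf2 : ‖f‖ ^ 2 ≤ C ^ 2 := pow_le_pow_left₀ (norm_nonneg f) hfC 2
    have hlt := Real.sqrt_lt_sqrt (mul_nonneg hn'.le (sub_nonneg.2 hf2)) hslack
    rw [Real.sqrt_mul (sq_nonneg C), Real.sqrt_sq (hf_pos.trans_le hfC).le] at hlt
    simpa [hφ] using hlt
  have hφ_cont : Continuous φ := by fun_prop
  obtain ⟨h, hφh, hh⟩ := ((mem_closure_iff_frequently.1 hf).and_eventually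
    ((hφ_cont.tendsto f).eventually_lt_const hφf)).exists
  obtain ⟨z, hz, hbound⟩ := exists_norm_sum_sub_sq_le_of_mem_convexHull hC hφh n
  refine ⟨z, hz, ?_⟩
  have hsplit : ∑ i, (z i - f) = ∑ i, (z i - h) + (n : ℝ) • (h - f) := by
    simp [sub_eq_add_neg, Finset.sum_add_distrib, smul_add, ← Nat.cast_smul_eq_nsmul ℝ]
  calc ‖∑ i, (z i - f)‖ ≤ ‖∑ i, (z i - h)‖ + n * ‖h - f‖ := by
        rw [hsplit]
        refine (norm_add_le _ _).trans_eq ?_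
        rw [norm_smul, Real.norm_natCast]
    _ ≤ φ h := add_le_add_left (by simpa using Real.abs_le_sqrt hbound) _
    _ ≤ C * √n := hh.le

theorem exists_norm_sub_sum_smul_le_of_mem_symmConvexHull {D : Set H} {C : ℝ}
    (hC : ∀ d ∈ D, ‖d‖ ≤ C) {f : H} (hf : f ∈ symmConvexHull D) {n : ℕ} (hn : 0 < n) :
    ∃ (a : Fin n → ℝ) (g : Fin n → H),
      (∀ i, g i ∈ D) ∧ (∑ i, |a i|) ≤ 1 ∧ ‖f - ∑ i, a i • g i‖ ≤ C / √n := by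
  have hCs : ∀ x ∈ D ∪ -D, ‖x‖ ≤ C := by
    rintro x (hx | hx)
    · exact hC x hx
    · simpa using hC (-x) hx
  obtain ⟨d₀, hd₀⟩ : D.Nonempty := by
    obtain ⟨x, hx | hx⟩ := convexHull_nonempty_iff.1 (closure_nonempty_iff.1 ⟨f, hf⟩)
    exacts [⟨x, hx⟩, ⟨-x, hx⟩]
  rcases eq_or_ne f 0 with rfl | hf0
  · refine ⟨0, fun _ => d₀, fun _ => hd₀, by simp, ?_⟩
    simpa using div_nonneg ((norm_nonneg d₀).trans (hC d₀ hd₀)) (Real.sqrt_nonneg n)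
  obtain ⟨z, hz, hbound⟩ := exists_norm_sum_sub_le_of_mem_closure_convexHull hCs hf hf0 hn
  have hsign : ∀ i, ∃ e : ℝ, ∃ d ∈ D, |e| = 1 ∧ z i = e • d := by
    intro i
    rcases hz i with hzi | hzi
    · exact ⟨1, z i, hzi, abs_one, (one_smul ℝ _).symm⟩
    · exact ⟨-1, -z i, hzi, by simp, by simp⟩
  choose e d hd he hzd using hsign
  have hn' : (0 : ℝ) < n := Nat.cast_pos.2 hn
  refine ⟨fun i => e i / n, d, hd, ?_, ?_⟩
  · simp [abs_div, he, hn'.ne']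
  · have hsum : f - ∑ i, (e i / n) • d i = -((n : ℝ)⁻¹ • ∑ i, (z i - f)) := by
      simp [hzd, Finset.sum_sub_distrib, smul_sub, div_eq_inv_mul, mul_smul, ← Finset.smul_sum,
        ← Nat.cast_smul_eq_nsmul ℝ, hn'.ne']
    rw [hsum, norm_neg, norm_smul, Real.norm_of_nonneg (inv_nonneg.2 hn'.le)]
    calc (n : ℝ)⁻¹ * ‖∑ i, (z i - f)‖ ≤ (n : ℝ)⁻¹ * (C * √n) := by gcongr
      _ = C / √n := by
        rw [← div_eq_inv_mul, mul_div_assoc, Real.sqrt_div_self', mul_one_div]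

end MaureySampling

theorem maurey_jones_barron_general
    {H : Type*} [NormedAddCommGroup H] [InnerProductSpace ℝ H]
    (D : Set H) (CD : ℝ) (hCD : ∀ d ∈ D, ‖d‖ ≤ CD)
    (M : ℝ) (hM : 0 < M) (f : H) (hf : f ∈ M • symmConvexHull D)
    (n : ℕ) (hn : 1 ≤ n) :
    ∃ (a : Fin n → ℝ) (g : Fin n → H),
      (∀ i, g i ∈ D) ∧ (∑ i, |a i|) ≤ M ∧
      ‖f - ∑ i, a i • g i‖ ≤ CD * M / Real.sqrt n := by
  obtain ⟨f₀, hf₀, rfl⟩ := mem_smul_set.1 hf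
  obtain ⟨a, g, hg, ha, hfa⟩ := exists_norm_sub_sum_smul_le_of_mem_symmConvexHull hCD hf₀ hn
  refine ⟨M • a, g, hg, ?_, ?_⟩
  · simp only [Pi.smul_apply, smul_eq_mul, abs_mul, abs_of_pos hM, ← Finset.mul_sum]
    exact mul_le_of_le_one_right hM.le ha
  · have hsum : ∑ i, (M • a) i • g i = M • ∑ i, a i • g i := by
      simp [Finset.smul_sum, smul_smul]
    rw [hsum, ← smul_sub, norm_smul, Real.norm_of_nonneg hM.le]
    exact (mul_le_mul_of_nonneg_left hfa hM.le).trans_eq (by ring)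

/-- **Maurey–Jones–Barron `n^{-1/2}` approximation rate.**
Let `H` be a real Hilbert space and `𝔻 ⊆ H` a dictionary with `sup_{d∈𝔻} ‖d‖ ≤ C_𝔻 < ∞`.
Then for every `M > 0`, every `f` in `M` times the closure of the convex hull of
`𝔻 ∪ (−𝔻)`, and every `n ≥ 1`, there exist `d_1, …, d_n ∈ 𝔻` and coefficients
`a_1, …, a_n` with `∑ |a_i| ≤ M` such that `‖f − ∑ a_i d_i‖ ≤ C_𝔻 M n^{−1/2}`. -/
theorem maurey_jones_barron
    {H : Type*} [NormedAddCommGroup H] [InnerProductSpace ℝ H] [CompleteSpace H]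
    (D : Set H) (CD : ℝ) (hCD : ∀ d ∈ D, ‖d‖ ≤ CD)
    (M : ℝ) (hM : 0 < M) (f : H) (hf : f ∈ M • symmConvexHull D)
    (n : ℕ) (hn : 1 ≤ n) :
    ∃ (a : Fin n → ℝ) (g : Fin n → H),
      (∀ i, g i ∈ D) ∧ (∑ i, |a i|) ≤ M ∧
      ‖f - ∑ i, a i • g i‖ ≤ CD * M / Real.sqrt n :=
  maurey_jones_barron_general D CD hCD M hM f hf n hn
end
end
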